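/- arXiv:1906.06488 — 9 statements merged into one kernel-verified Lean document; each statement's English description precedes it below -/
import Mathlib

section
/- For every integer n ≥ 6, the super-connectivity of the Johnson graph J(n,2) equals 3(n−3); that is, there exists a super vertex-cut of J(n,2) of size 3(n−3), and every super vertex-cut of J(n,2) has at least 3(n−3) vertices. -/
open SimpleGraph Finset

/-- Vertex type of the Johnson graph `J(n,k)`: the `k`-element subsets of `[n]`. -/
abbrev JV (n k : ℕ) := {s : Finset (Fin n) // s.card = k}

/-- The Johnson graph `J(n,k)`: two `k`-subsets are adjacent iff their
intersection has exactly `k-1` elements. -/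
def johnsonGraph (n k : ℕ) : SimpleGraph (JV n k) where
  Adj u v := u ≠ v ∧ (u.val ∩ v.val).card = k - 1
  symm := by
    constructor
    intro u v h
    exact ⟨h.1.symm, by rw [Finset.inter_comm]; exact h.2⟩
  loopless := by
    constructor
    intro u h
    exact h.1 rfl

/-- `S` is a vertex-cut of `G` if deleting `S` disconnects `G`. -/
def IsVertexCut {V : Type*} (G : SimpleGraph V) (S : Set V) : Prop :=
  ¬ (G.induce Sᶜ).Preconnected

/-- `S` is a super vertex-cut of `G` if deleting `S` disconnects `G` and
leaves no isolated vertex. -/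
def IsSuperVertexCut {V : Type*} (G : SimpleGraph V) (S : Set V) : Prop :=
  IsVertexCut G S ∧ ∀ v : ↥Sᶜ, ∃ w : ↥Sᶜ, (G.induce Sᶜ).Adj v w

/-- The super-connectivity of `G`: the least cardinality of a super vertex-cut,
or `⊤` if none exists. -/
noncomputable def superConnectivity {V : Type*} [Fintype V] (G : SimpleGraph V) : ℕ∞ :=
  sInf {m : ℕ∞ | ∃ S : Finset V, IsSuperVertexCut G ↑S ∧ (S.card : ℕ∞) = m}

/-- `S` is a minimum super vertex-cut of `G`. -/
def IsMinSuperVertexCut {V : Type*} [Fintype V] (G : SimpleGraph V) (S : Finset V) : Prop :=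
  IsSuperVertexCut G ↑S ∧ ∀ T : Finset V, IsSuperVertexCut G ↑T → S.card ≤ T.card

/-! If `S` is a vertex-cut of `J(n,2)` and `X ⊆ [n]` is the union of the pairs in one component
of `J(n,2) - S`, then every pair outside `S` meeting `X` lies in that component, because two
distinct pairs sharing an element are adjacent. So all pairs with exactly one element in `X`
lie in `S`, and `#S ≥ #X * #Xᶜ`. A vertex of that component and one of another component each
have a neighbour, which forces `#X ≥ 3` and `#Xᶜ ≥ 3`, hence `#S ≥ 3(n - 3)`. Conversely, for
any `X` with `#X = 3` those crossing pairs form a super vertex-cut of exactly this size. -/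

theorem superConnectivity_eq_of_isSuperVertexCut {V : Type*} [Fintype V] {G : SimpleGraph V}
    {S₀ : Finset V} (hS₀ : IsSuperVertexCut G ↑S₀)
    (hmin : ∀ S : Finset V, IsSuperVertexCut G ↑S → #S₀ ≤ #S) :
    superConnectivity G = #S₀ :=
  le_antisymm (sInf_le ⟨S₀, hS₀, rfl⟩) <| le_sInf <| by
    rintro m ⟨S, hS, rfl⟩
    exact_mod_cast hmin S hS

namespace JohnsonTwo

variable {n : ℕ}

theorem adj_iff {p q : JV n 2} :
    (johnsonGraph n 2).Adj p q ↔ p ≠ q ∧ (p.val ∩ q.val).Nonempty := by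
  refine and_congr_right fun hpq => ?_
  have hle : #(p.val ∩ q.val) ≤ 2 := (card_le_card inter_subset_left).trans_eq p.2
  have hne : #(p.val ∩ q.val) ≠ 2 := fun h2 => hpq <| Subtype.ext <|
    (eq_of_subset_of_card_le inter_subset_left (by rw [h2, p.2])).symm.trans
      (eq_of_subset_of_card_le inter_subset_right (by rw [h2, q.2]))
  rw [← card_pos]
  omega

theorem card_union_of_adj {p q : JV n 2} (h : (johnsonGraph n 2).Adj p q) :
    #(p.val ∪ q.val) = 3 := by
  have h₂ : #(p.val ∩ q.val) = 1 := h.2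
  linarith [card_union_add_card_inter p.val q.val, p.2, q.2]

theorem exists_subset_of_two_le_card {Y : Finset (Fin n)} (hY : 2 ≤ #Y) :
    ∃ p : JV n 2, p.val ⊆ Y := by
  obtain ⟨p, hpY, hp⟩ := exists_subset_card_eq hY
  exact ⟨⟨p, hp⟩, hpY⟩

theorem exists_adj_subset_of_subset {Y : Finset (Fin n)} (hY : 3 ≤ #Y) {p : JV n 2}
    (hp : p.val ⊆ Y) : ∃ q : JV n 2, q.val ⊆ Y ∧ (johnsonGraph n 2).Adj p q := by
  obtain ⟨a, ha⟩ := card_pos.mp (by rw [p.2]; omega : 0 < #p.val)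
  obtain ⟨c, hc⟩ : (Y \ p.val).Nonempty := by
    rw [← card_pos, card_sdiff_of_subset hp, p.2]
    omega
  obtain ⟨hcY, hcp⟩ := mem_sdiff.mp hc
  have hac : a ≠ c := fun h => hcp (h ▸ ha)
  refine ⟨⟨{a, c}, card_pair hac⟩, insert_subset (hp ha) (singleton_subset_iff.mpr hcY), ?_⟩
  refine adj_iff.mpr ⟨fun h => hcp ?_, a, mem_inter.mpr ⟨ha, mem_insert_self a _⟩⟩
  exact (congrArg Subtype.val h) ▸ mem_insert_of_mem (mem_singleton_self c)

def crossPairs (X : Finset (Fin n)) : Finset (JV n 2) :=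
  {p | #(p.val ∩ X) = 1}

theorem mem_crossPairs {X : Finset (Fin n)} {p : JV n 2} :
    p ∈ crossPairs X ↔ #(p.val ∩ X) = 1 := by
  simp [crossPairs]

theorem notMem_crossPairs_iff {X : Finset (Fin n)} {p : JV n 2} :
    p ∉ crossPairs X ↔ p.val ⊆ X ∨ p.val ⊆ Xᶜ := by
  rw [mem_crossPairs, subset_compl_iff_disjoint_right, ← inter_eq_left, disjoint_iff_inter_eq_empty,
    ← card_eq_zero]
  have hle : #(p.val ∩ X) ≤ 2 := (card_le_card inter_subset_left).trans_eq p.2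
  constructor
  · intro h
    rcases (by omega : #(p.val ∩ X) = 0 ∨ #(p.val ∩ X) = 2) with h0 | h2
    · exact Or.inr h0
    · exact Or.inl (eq_of_subset_of_card_le inter_subset_left (by rw [h2, p.2]))
  · rintro (h | h) <;> rw [h] <;> simp [p.2]

theorem pair_inter_eq {α : Type*} [DecidableEq α] {X : Finset α} {a b : α} (ha : a ∈ X)
    (hb : b ∉ X) : ({a, b} : Finset α) ∩ X = {a} := by
  rw [insert_inter_of_mem ha, singleton_inter_of_notMem hb, insert_empty]

theorem card_crossPairs (X : Finset (Fin n)) : #(crossPairs X) = #X * #Xᶜ := by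
  rw [← card_product]
  symm
  refine card_bij (fun ab hab => ⟨{ab.1, ab.2}, card_pair fun h =>
      (mem_compl.mp (mem_product.mp hab).2) (h ▸ (mem_product.mp hab).1)⟩) ?_ ?_ ?_
  · rintro ⟨a, b⟩ hab
    obtain ⟨ha, hb⟩ := mem_product.mp hab
    rw [mem_crossPairs, pair_inter_eq ha (mem_compl.mp hb), card_singleton]
  · rintro ⟨a, b⟩ hab ⟨a', b'⟩ hab' h
    obtain ⟨ha, hb⟩ := mem_product.mp hab
    obtain ⟨ha', hb'⟩ := mem_product.mp hab'
    have h : ({a, b} : Finset (Fin n)) = {a', b'} := congrArg Subtype.val h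
    have hXa := pair_inter_eq ha (mem_compl.mp hb)
    have hXca := pair_inter_eq hb (notMem_compl.mpr ha)
    rw [h, pair_inter_eq ha' (mem_compl.mp hb'), singleton_inj] at hXa
    rw [pair_comm, h, pair_comm, pair_inter_eq hb' (notMem_compl.mpr ha'), singleton_inj] at hXca
    exact Prod.ext hXa.symm hXca.symm
  · intro p hp
    have hp := mem_crossPairs.mp hp
    obtain ⟨a, ha⟩ := card_eq_one.mp hp
    obtain ⟨b, hb⟩ : ∃ b, p.val ∩ Xᶜ = {b} := by
      rw [← card_eq_one]
      have hsplit := card_inter_add_card_sdiff p.val X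
      rw [sdiff_eq_inter_compl, p.2] at hsplit
      omega
    have haX : a ∈ p.val ∩ X := ha ▸ mem_singleton_self a
    have hbX : b ∈ p.val ∩ Xᶜ := hb ▸ mem_singleton_self b
    refine ⟨(a, b), mem_product.mpr ⟨(mem_inter.mp haX).2, (mem_inter.mp hbX).2⟩, ?_⟩
    have hsplit := sup_inf_sdiff p.val X
    rw [sdiff_eq_inter_compl, inf_eq_inter, ha, hb] at hsplit
    exact Subtype.ext ((insert_eq a {b}).trans hsplit)

theorem subset_of_adj_of_notMem_crossPairs {X : Finset (Fin n)} {p q : JV n 2}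
    (hq : q ∉ crossPairs X) (hpq : (johnsonGraph n 2).Adj p q) (hp : p.val ⊆ X) : q.val ⊆ X := by
  refine (notMem_crossPairs_iff.mp hq).resolve_right fun hqX => ?_
  obtain ⟨x, hx⟩ := (adj_iff.mp hpq).2
  exact mem_compl.mp (hqX (mem_inter.mp hx).2) (hp (mem_inter.mp hx).1)

theorem subset_of_reachable_of_subset {X : Finset (Fin n)}
    {p q : ↥(↑(crossPairs X) : Set (JV n 2))ᶜ}
    (h : ((johnsonGraph n 2).induce (↑(crossPairs X))ᶜ).Reachable p q) (hp : p.1.val ⊆ X) :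
    q.1.val ⊆ X := by
  rw [reachable_iff_reflTransGen] at h
  induction h with
  | refl => exact hp
  | @tail _ c _ hadj ih => exact subset_of_adj_of_notMem_crossPairs c.2 hadj ih

theorem isSuperVertexCut_crossPairs {X : Finset (Fin n)} (hX : 3 ≤ #X) (hXc : 3 ≤ #Xᶜ) :
    IsSuperVertexCut (johnsonGraph n 2) ↑(crossPairs X) := by
  have mem {p : JV n 2} (hp : p.val ⊆ X ∨ p.val ⊆ Xᶜ) : p ∈ (↑(crossPairs X) : Set (JV n 2))ᶜ :=
    notMem_crossPairs_iff.mpr hp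
  refine ⟨fun hconn => ?_, fun p => ?_⟩
  · obtain ⟨p, hp⟩ := exists_subset_of_two_le_card (by omega : 2 ≤ #X)
    obtain ⟨q, hq⟩ := exists_subset_of_two_le_card (by omega : 2 ≤ #Xᶜ)
    have hqX := subset_of_reachable_of_subset (hconn ⟨p, mem (.inl hp)⟩ ⟨q, mem (.inr hq)⟩) hp
    obtain ⟨x, hx⟩ := card_pos.mp (by rw [q.2]; omega : 0 < #q.val)
    exact mem_compl.mp (hq hx) (hqX hx)
  · rcases notMem_crossPairs_iff.mp p.2 with hpX | hpX
    · obtain ⟨q, hqX, hpq⟩ := exists_adj_subset_of_subset hX hpX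
      exact ⟨⟨q, mem (.inl hqX)⟩, hpq⟩
    · obtain ⟨q, hqX, hpq⟩ := exists_adj_subset_of_subset hXc hpX
      exact ⟨⟨q, mem (.inr hqX)⟩, hpq⟩

theorem exists_crossPairs_subset_of_not_reachable {S : Set (JV n 2)} {u v : ↥Sᶜ}
    (huv : ¬ ((johnsonGraph n 2).induce Sᶜ).Reachable u v) :
    ∃ X : Finset (Fin n),
      (∀ w, ((johnsonGraph n 2).induce Sᶜ).Reachable u w → w.1.val ⊆ X) ∧
      (∀ w, ((johnsonGraph n 2).induce Sᶜ).Reachable v w → w.1.val ⊆ Xᶜ) ∧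
      ↑(crossPairs X) ⊆ S := by
  classical
  set H := (johnsonGraph n 2).induce Sᶜ
  let X : Finset (Fin n) := {x | ∃ w : ↥Sᶜ, H.Reachable u w ∧ x ∈ w.1.val}
  have mem_X (x : Fin n) : x ∈ X ↔ ∃ w : ↥Sᶜ, H.Reachable u w ∧ x ∈ w.1.val := by simp [X]
  have reachable_of_mem (w : ↥Sᶜ) (x : Fin n) (hxw : x ∈ w.1.val) (hxX : x ∈ X) :
      H.Reachable u w := by
    obtain ⟨w₀, hw₀, hxw₀⟩ := (mem_X x).mp hxX
    by_cases h : w₀ = w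
    · exact h ▸ hw₀
    · refine hw₀.trans (Adj.reachable ?_)
      exact adj_iff.mpr ⟨fun e => h (Subtype.ext e), x, mem_inter.mpr ⟨hxw₀, hxw⟩⟩
  have subset_X (w : ↥Sᶜ) (hw : H.Reachable u w) : w.1.val ⊆ X :=
    fun x hx => (mem_X x).mpr ⟨w, hw, hx⟩
  refine ⟨X, subset_X, fun w hw x hx => mem_compl.mpr fun hxX =>
    huv ((reachable_of_mem w x hx hxX).trans hw.symm), fun p hp => ?_⟩
  by_contra hpS
  have hp := mem_crossPairs.mp hp
  obtain ⟨x, hx⟩ := card_pos.mp (by omega : 0 < #(p.val ∩ X))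
  obtain ⟨hxp, hxX⟩ := mem_inter.mp hx
  have hpX := subset_X ⟨p, hpS⟩ (reachable_of_mem ⟨p, hpS⟩ x hxp hxX)
  exact notMem_crossPairs_iff.mpr (.inl hpX) (mem_crossPairs.mpr hp)

theorem exists_crossPairs_subset_of_isSuperVertexCut {S : Set (JV n 2)}
    (hS : IsSuperVertexCut (johnsonGraph n 2) S) :
    ∃ X : Finset (Fin n), 3 ≤ #X ∧ 3 ≤ #Xᶜ ∧ ↑(crossPairs X) ⊆ S := by
  obtain ⟨u, v, huv⟩ : ∃ u v, ¬ ((johnsonGraph n 2).induce Sᶜ).Reachable u v := by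
    simpa [IsVertexCut, Preconnected] using hS.1
  obtain ⟨X, hu, hv, hXS⟩ := exists_crossPairs_subset_of_not_reachable huv
  obtain ⟨u', huu'⟩ := hS.2 u
  obtain ⟨v', hvv'⟩ := hS.2 v
  refine ⟨X, ?_, ?_, hXS⟩
  · calc 3 = #(u.1.val ∪ u'.1.val) := (card_union_of_adj huu').symm
      _ ≤ #X := card_le_card (union_subset (hu u .rfl) (hu u' huu'.reachable))
  · calc 3 = #(v.1.val ∪ v'.1.val) := (card_union_of_adj hvv').symm
      _ ≤ #Xᶜ := card_le_card (union_subset (hv v .rfl) (hv v' hvv'.reachable))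

theorem three_mul_sub_three_le_card_of_isSuperVertexCut {S : Finset (JV n 2)}
    (hS : IsSuperVertexCut (johnsonGraph n 2) ↑S) : 3 * (n - 3) ≤ #S := by
  obtain ⟨X, hX, hXc, hXS⟩ := exists_crossPairs_subset_of_isSuperVertexCut hS
  have hn : #X + #Xᶜ = n := by rw [card_add_card_compl, Fintype.card_fin]
  obtain ⟨a, ha⟩ := Nat.exists_eq_add_of_le hX
  obtain ⟨b, hb⟩ := Nat.exists_eq_add_of_le hXc
  calc 3 * (n - 3) ≤ #X * #Xᶜ := by
        rw [show n - 3 = 3 + a + b by omega, ha, hb]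
        nlinarith
    _ = #(crossPairs X) := (card_crossPairs X).symm
    _ ≤ #S := card_le_card (by exact_mod_cast hXS)

end JohnsonTwo

open JohnsonTwo in
/-- For `n ≥ 6`, the super-connectivity of `J(n,2)` equals `3(n-3)`:
there is a super vertex-cut of this size, and every super vertex-cut is at
least this large. -/
theorem superConnectivity_johnson_two (n : ℕ) (hn : 6 ≤ n) :
    superConnectivity (johnsonGraph n 2) = ((3 * (n - 3) : ℕ) : ℕ∞) ∧
    (∃ S : Finset (JV n 2),
        IsSuperVertexCut (johnsonGraph n 2) ↑S ∧ S.card = 3 * (n - 3)) ∧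
    (∀ S : Finset (JV n 2),
        IsSuperVertexCut (johnsonGraph n 2) ↑S → 3 * (n - 3) ≤ S.card) := by
  obtain ⟨X, -, hX⟩ := exists_subset_card_eq (s := (univ : Finset (Fin n))) (n := 3)
    (by rw [card_univ, Fintype.card_fin]; omega)
  have hXc : #Xᶜ = n - 3 := by rw [card_compl, Fintype.card_fin, hX]
  have hcut := isSuperVertexCut_crossPairs hX.ge (by omega)
  have hcard : #(crossPairs X) = 3 * (n - 3) := by rw [card_crossPairs, hX, hXc]
  have hmin (S : Finset (JV n 2)) (hS : IsSuperVertexCut (johnsonGraph n 2) ↑S) :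
      3 * (n - 3) ≤ #S :=
    three_mul_sub_three_le_card_of_isSuperVertexCut hS
  refine ⟨?_, ⟨_, hcut, hcard⟩, hmin⟩
  rw [← hcard]
  exact superConnectivity_eq_of_isSuperVertexCut hcut (hcard ▸ hmin)
end

section
/- Let k ≥ 3 and n ≥ k+3 be integers, and let S be a minimum super vertex-cut of the Johnson graph J(n,k). Then for every element r ∈ [n] there is at least one vertex of S (a k-subset of [n]) that contains r. -/
/-!
If no vertex of `S` contains `r`, then every vertex containing `r` survives the deletion of `S`.
These vertices are connected among themselves: two of them are joined by swapping, one element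
at a time, an element of the first that the second lacks for one of the second that the first
lacks, which never removes `r`. Every other surviving vertex is adjacent to one of them, by
swapping any of its elements for `r`. Hence deleting `S` does not disconnect `J(n,k)`.
-/

open SimpleGraph Finset

variable {n k : ℕ}

def JV.swap (u : JV n k) {a b : Fin n} (ha : a ∈ u.val) (hb : b ∉ u.val) : JV n k :=
  ⟨insert b (u.val.erase a), by
    rw [card_insert_of_notMem fun h => hb (mem_of_mem_erase h), card_erase_of_mem ha, u.2]
    have : 0 < k := u.2 ▸ card_pos.2 ⟨a, ha⟩
    omega⟩

theorem JV.mem_swap {u : JV n k} {a b : Fin n} (ha : a ∈ u.val) (hb : b ∉ u.val) {x : Fin n} :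
    x ∈ (u.swap ha hb).val ↔ x = b ∨ x ≠ a ∧ x ∈ u.val := by
  simp [JV.swap]

theorem johnsonGraph_adj_swap (u : JV n k) {a b : Fin n} (ha : a ∈ u.val) (hb : b ∉ u.val) :
    (johnsonGraph n k).Adj u (u.swap ha hb) := by
  refine ⟨fun h => hb (h ▸ (JV.mem_swap ha hb).2 (Or.inl rfl)), ?_⟩
  change #(u.val ∩ insert b (u.val.erase a)) = k - 1
  rw [inter_insert_of_notMem hb, inter_eq_right.2 (erase_subset a u.val), card_erase_of_mem ha,
    u.2]

theorem JV.swap_sdiff (u v : JV n k) {a b : Fin n} (ha : a ∈ u.val) (hb : b ∉ u.val)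
    (hbv : b ∈ v.val) : (u.swap ha hb).val \ v.val = (u.val \ v.val).erase a := by
  rw [JV.swap, insert_sdiff_of_mem _ hbv, erase_sdiff_comm]

section InducedOnStar

variable {C : Set (JV n k)} {r : Fin n}

theorem reachable_induce_of_mem_of_mem (hC : ∀ w : JV n k, r ∈ w.val → w ∈ C) {u v : JV n k}
    (hu : r ∈ u.val) (hv : r ∈ v.val) :
    ((johnsonGraph n k).induce C).Reachable ⟨u, hC u hu⟩ ⟨v, hC v hv⟩ := by
  obtain ⟨m, hm⟩ : ∃ m, #(u.val \ v.val) = m := ⟨_, rfl⟩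
  induction m generalizing u with
  | zero =>
    have huv : u.val ⊆ v.val := sdiff_eq_empty_iff_subset.1 (card_eq_zero.1 hm)
    obtain rfl : u = v := Subtype.ext (eq_of_subset_of_card_le huv (by rw [u.2, v.2]))
    rfl
  | succ m ih =>
    obtain ⟨a, ha⟩ : (u.val \ v.val).Nonempty := card_pos.1 (by omega)
    obtain ⟨b, hb⟩ : (v.val \ u.val).Nonempty :=
      card_pos.1 (by rw [← card_sdiff_comm (by rw [u.2, v.2])]; omega)
    obtain ⟨hau, hav⟩ := mem_sdiff.1 ha
    obtain ⟨hbv, hbu⟩ := mem_sdiff.1 hb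
    have hru' : r ∈ (u.swap hau hbu).val :=
      (JV.mem_swap hau hbu).2 (Or.inr ⟨fun hra => hav (hra ▸ hv), hu⟩)
    have hstep : ((johnsonGraph n k).induce C).Adj ⟨u, hC u hu⟩ ⟨_, hC _ hru'⟩ :=
      johnsonGraph_adj_swap u hau hbu
    refine hstep.reachable.trans (ih hru' ?_)
    rw [JV.swap_sdiff u v hau hbu hbv, card_erase_of_mem ha, hm, Nat.add_sub_cancel]

theorem preconnected_induce_of_forall_mem (hk : 0 < k) (hC : ∀ w : JV n k, r ∈ w.val → w ∈ C) :
    ((johnsonGraph n k).induce C).Preconnected := by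
  have hstar : ∀ u : C, ∃ (w : JV n k) (hw : r ∈ w.val),
      ((johnsonGraph n k).induce C).Reachable u ⟨w, hC w hw⟩ := by
    rintro ⟨u, huC⟩
    by_cases hru : r ∈ u.val
    · exact ⟨u, hru, Reachable.refl _⟩
    · obtain ⟨a, ha⟩ : u.val.Nonempty := card_pos.1 (by rw [u.2]; exact hk)
      have hrw : r ∈ (u.swap ha hru).val := (JV.mem_swap ha hru).2 (Or.inl rfl)
      have hstep : ((johnsonGraph n k).induce C).Adj ⟨u, huC⟩ ⟨_, hC _ hrw⟩ :=
        johnsonGraph_adj_swap u ha hru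
      exact ⟨_, hrw, hstep.reachable⟩
  intro u v
  obtain ⟨u', hu', hreach_u⟩ := hstar u
  obtain ⟨v', hv', hreach_v⟩ := hstar v
  exact hreach_u.trans ((reachable_induce_of_mem_of_mem hC hu' hv').trans hreach_v.symm)

end InducedOnStar

theorem mem_vertex_of_minSuperVertexCut_general (n k : ℕ) (hk : 3 ≤ k)
    (S : Finset (JV n k)) (hS : IsMinSuperVertexCut (johnsonGraph n k) S) :
    ∀ r : Fin n, ∃ x ∈ S, r ∈ x.val := by
  intro r
  by_contra! hr
  exact hS.1.1 (preconnected_induce_of_forall_mem (by omega) fun w hrw hwS => hr w hwS hrw)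

/-- Every element `r ∈ [n]` is contained in at least one vertex of a minimum
super vertex-cut of `J(n,k)`, for `k ≥ 3` and `n ≥ k+3`. -/
theorem mem_vertex_of_minSuperVertexCut (n k : ℕ) (hk : 3 ≤ k) (hn : k + 3 ≤ n)
    (S : Finset (JV n k)) (hS : IsMinSuperVertexCut (johnsonGraph n k) S) :
    ∀ r : Fin n, ∃ x ∈ S, r ∈ x.val :=
  mem_vertex_of_minSuperVertexCut_general n k hk S hS
end

section
/- Let k ≥ 3 and n ≥ k+3 be integers, and let S be a minimum super vertex-cut of the Johnson graph J(n,k). Then there is no element r ∈ [n] that is contained in every vertex of S; that is, for each r ∈ [n] some vertex of S omits r. -/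
open SimpleGraph Finset

/-
If every vertex of `S` contains `r`, then `J(n,k) - S` still contains all `r`-free vertices.
These span a copy of `J(n-1,k)`, which is connected (exchange one element at a time), and
every remaining vertex containing `r` is adjacent to one of them (exchange `r` for some element
outside it; for `n ≤ k` there is only one vertex). So `J(n,k) - S` is connected and `S` is not
a vertex-cut.
-/

namespace SimpleGraph

variable {V : Type*} {G : SimpleGraph V} {s t : Set V}

theorem Preconnected.induce_of_forall_exists_adj (hs : (G.induce s).Preconnected) (hst : s ⊆ t)
    (ht : ∀ v ∈ t, v ∉ s → ∃ w ∈ s, G.Adj v w) : (G.induce t).Preconnected := by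
  have reach_s : ∀ v : t, ∃ w : s, (G.induce t).Reachable v (Set.inclusion hst w) := by
    rintro ⟨v, hv⟩
    by_cases hvs : v ∈ s
    · exact ⟨⟨v, hvs⟩, Reachable.refl _⟩
    · obtain ⟨w, hws, hvw⟩ := ht v hv hvs
      have hadj : (G.induce t).Adj ⟨v, hv⟩ ⟨w, hst hws⟩ := hvw
      exact ⟨⟨w, hws⟩, hadj.reachable⟩
  intro x y
  obtain ⟨x', hx⟩ := reach_s x
  obtain ⟨y', hy⟩ := reach_s y
  exact hx.trans (((hs x' y').map (G.induceHomOfLE hst).toHom).trans hy.symm)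

end SimpleGraph

namespace JV

variable {n k : ℕ}

def exchange (u : JV n k) {a b : Fin n} (ha : a ∈ u.val) (hb : b ∉ u.val) : JV n k :=
  ⟨insert b (u.val.erase a), by
    rw [card_insert_of_notMem (fun h => hb (mem_of_mem_erase h)), card_erase_of_mem ha,
      Nat.sub_add_cancel (card_pos.mpr ⟨a, ha⟩), u.2]⟩

theorem notMem_exchange (u : JV n k) {a b : Fin n} (ha : a ∈ u.val) (hb : b ∉ u.val) :
    a ∉ (u.exchange ha hb).val := by
  rw [exchange, mem_insert, not_or]
  exact ⟨fun hab => hb (hab ▸ ha), notMem_erase a _⟩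

theorem adj_exchange (u : JV n k) {a b : Fin n} (ha : a ∈ u.val) (hb : b ∉ u.val) :
    (johnsonGraph n k).Adj u (u.exchange ha hb) := by
  refine ⟨fun h => ?_, ?_⟩
  · have := u.notMem_exchange ha hb
    rw [← h] at this
    exact this ha
  · rw [exchange, inter_insert_of_notMem hb, inter_erase, inter_self, card_erase_of_mem ha, u.2]

theorem subsingleton_of_le (h : n ≤ k) : Subsingleton (JV n k) := by
  have eq_univ : ∀ u : JV n k, u.val = univ := fun u =>
    eq_univ_of_card _ (le_antisymm (card_le_univ _) (by simpa [u.2] using h))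
  exact ⟨fun u v => Subtype.ext ((eq_univ u).trans (eq_univ v).symm)⟩

end JV

variable {n k : ℕ}

theorem johnsonGraph_induce_setOf_notMem_preconnected (r : Fin n) :
    ((johnsonGraph n k).induce {w | r ∉ w.val}).Preconnected := by
  rintro ⟨u, hu⟩ ⟨v, hv⟩
  induction h : (u.val \ v.val).card generalizing u with
  | zero =>
    obtain rfl : u = v := Subtype.ext <| eq_of_subset_of_card_le
      (sdiff_eq_empty_iff_subset.mp (card_eq_zero.mp h)) (by rw [u.2, v.2])
    rfl
  | succ m ih =>
    have hvu : (v.val \ u.val).card = m + 1 := (card_sdiff_comm (v.2.trans u.2.symm)).trans h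
    obtain ⟨a, ha⟩ : (u.val \ v.val).Nonempty := card_pos.mp (by omega)
    obtain ⟨b, hb⟩ : (v.val \ u.val).Nonempty := card_pos.mp (by omega)
    rw [mem_sdiff] at ha hb
    have hr : r ∉ (u.exchange ha.1 hb.2).val := by
      simp only [JV.exchange, mem_insert, mem_erase, not_or, not_and]
      exact ⟨fun hrb => hv (hrb ▸ hb.1), fun _ => hu⟩
    have hcard : ((u.exchange ha.1 hb.2).val \ v.val).card = m := by
      rw [JV.exchange, insert_sdiff_of_mem _ hb.1, erase_sdiff_comm,
        card_erase_of_mem (mem_sdiff.mpr ha), h, Nat.add_sub_cancel]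
    have hadj : ((johnsonGraph n k).induce {w | r ∉ w.val}).Adj ⟨u, hu⟩ ⟨_, hr⟩ :=
      u.adj_exchange ha.1 hb.2
    exact hadj.reachable.trans (ih _ hr hcard)

theorem johnsonGraph_induce_compl_preconnected_of_forall_mem {S : Set (JV n k)} {r : Fin n}
    (hS : ∀ x ∈ S, r ∈ x.val) : ((johnsonGraph n k).induce Sᶜ).Preconnected := by
  rcases le_or_gt n k with hnk | hkn
  · have := JV.subsingleton_of_le hnk
    exact .of_subsingleton
  refine (johnsonGraph_induce_setOf_notMem_preconnected r).induce_of_forall_exists_adj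
    (fun w hw hwS => hw (hS w hwS)) fun w _ hrw => ?_
  obtain hrw : r ∈ w.val := not_not.mp hrw
  obtain ⟨b, -, hb⟩ := exists_mem_notMem_of_card_lt_card (s := w.val) (t := univ)
    (by rwa [w.2, card_univ, Fintype.card_fin])
  exact ⟨w.exchange hrw hb, w.notMem_exchange hrw hb, w.adj_exchange hrw hb⟩

theorem not_mem_vertex_of_minSuperVertexCut_general (n k : ℕ)
    (S : Finset (JV n k)) (hS : IsMinSuperVertexCut (johnsonGraph n k) S) :
    ∀ r : Fin n, ∃ x ∈ S, r ∉ x.val := by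
  intro r
  by_contra! hr
  exact hS.1.1 (johnsonGraph_induce_compl_preconnected_of_forall_mem (r := r) hr)

/-- No element `r ∈ [n]` is contained in every vertex of a minimum super
vertex-cut of `J(n,k)`, for `k ≥ 3` and `n ≥ k+3`. -/
theorem not_mem_vertex_of_minSuperVertexCut (n k : ℕ) (hk : 3 ≤ k) (hn : k + 3 ≤ n)
    (S : Finset (JV n k)) (hS : IsMinSuperVertexCut (johnsonGraph n k) S) :
    ∀ r : Fin n, ∃ x ∈ S, r ∉ x.val :=
  not_mem_vertex_of_minSuperVertexCut_general n k S hS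
end

section
/- Let k ≥ 3 and n ≥ k+3 be integers, let S be a minimum super vertex-cut of the Johnson graph G = J(n,k), let C be a smallest connected component of G−S, and let C* denote the union of the remaining components of G−S. Then there exists an element r ∈ [n] such that some vertex of C does not contain r and some vertex of C* does not contain r. -/
/-!
If no such `r` existed, every element of `[n]` would lie in all vertices of `C` or in all
vertices of `C*`; call these common sets `A` and `B`, so `|A| + |B| ≥ n`. Since `G - S` has no
isolated vertex, both sides contain an edge, so `|A|, |B| < k`, and the vertices of `C` (resp. `C*`)
are among the `C(n - |A|, k - |A|)` (resp. `C(n - |B|, k - |B|)`) `k`-sets containing `A` (resp. `B`).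
On the other hand, for a pair `P` the vertices meeting `P` in exactly one point form a super
vertex-cut leaving the `C(n-2, k-2) + C(n-2, k)` vertices that contain or avoid `P`, so minimality of
`S` gives `|C| + |C*| ≥ C(n-2, k-2) + C(n-2, k)`. Convexity of `s ↦ C(s, n - k)` shows this is
impossible when `|A| + |B| ≥ n`.
-/

open SimpleGraph Finset

namespace Nat

lemma choose_succ_add_choose_le {a b : ℕ} (m : ℕ) (hab : a ≤ b) :
    (a + 1).choose m + b.choose m ≤ a.choose m + (b + 1).choose m := by
  cases m with
  | zero => simp
  | succ m =>
    have := Nat.choose_le_choose m hab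
    rw [choose_succ_succ', choose_succ_succ']
    omega

/-- Convexity of `s ↦ C(s, m)`: among arguments `≥ m + 1` with a fixed sum, the sum of the two
binomials is largest when one argument is `m + 1`. -/
lemma choose_add_choose_le_choose (m i j : ℕ) :
    (m + 1 + i).choose m + (m + 1 + j).choose m ≤ (m + 1) + (m + 1 + i + j).choose m := by
  wlog hij : i ≤ j generalizing i j
  · have := this j i (by omega)
    rw [add_right_comm (m + 1) j i] at this
    omega
  induction i generalizing j with
  | zero => simp [choose_succ_self_right]
  | succ i ih =>
    have hstep := choose_succ_add_choose_le m (show m + 1 + i ≤ m + 1 + j by omega)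
    have hih := ih (j + 1) (by omega)
    rw [show m + 1 + (j + 1) = m + 1 + j + 1 by omega] at hih
    rw [show m + 1 + (i + 1) + j = m + 1 + i + (j + 1) by omega,
      show m + 1 + (i + 1) = m + 1 + i + 1 by omega]
    omega

lemma choose_add_choose_lt {n k a b : ℕ} (hk : 3 ≤ k) (hn : k + 3 ≤ n)
    (ha : a < k) (hb : b < k) (hab : n ≤ a + b) :
    (n - a).choose (k - a) + (n - b).choose (k - b) < (n - 2).choose (k - 2) + (n - 2).choose k := by
  obtain ⟨m, rfl⟩ : ∃ m, n = k + m := ⟨n - k, by omega⟩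
  have choose_eq {c : ℕ} (hc : c < k) :
      (k + m - c).choose (k - c) = (m + 1 + (k - 1 - c)).choose m := by
    rw [show k + m - c = m + (k - c) by omega, ← choose_symm_add]
    congr 1; omega
  have hconvex := choose_add_choose_le_choose m (k - 1 - a) (k - 1 - b)
  have hmono := Nat.choose_le_choose m
    (show m + 1 + (k - 1 - a) + (k - 1 - b) ≤ k + m - 2 by omega)
  have hsmall : m + 1 < (k + m - 2).choose k :=
    calc m + 1 < k + 1 := by omega
      _ = (k + 1).choose k := (choose_succ_self_right k).symm
      _ ≤ (k + m - 2).choose k := Nat.choose_le_choose k (by omega)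
  have hsymm : (k + m - 2).choose (k - 2) = (k + m - 2).choose m := by
    rw [show k + m - 2 = k - 2 + m by omega, choose_symm_add]
  rw [choose_eq ha, choose_eq hb, hsymm]
  omega

end Nat

lemma Finset.card_inter_ne_one_iff {α : Type*} [DecidableEq α] {s P : Finset α} (hP : #P = 2) :
    #(s ∩ P) ≠ 1 ↔ P ⊆ s ∨ Disjoint s P := by
  have hle : #(s ∩ P) ≤ 2 := hP ▸ card_le_card inter_subset_right
  rw [← inter_eq_right, disjoint_iff_inter_eq_empty, ← card_eq_zero,
    ← eq_iff_card_le_of_subset inter_subset_right]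
  omega

section Counting

variable {α : Type*} [Fintype α] {k : ℕ}

lemma card_filter_subtype_card_eq (q : Finset α → Prop) [DecidablePred q] :
    #{v : {s : Finset α // #s = k} | q v.val} = #{s ∈ powersetCard k univ | q s} := by
  rw [← card_map (Function.Embedding.subtype _)]
  congr 1
  ext s
  simp [and_comm]

variable [DecidableEq α]

lemma card_filter_subtype_superset {A : Finset α} (hA : #A ≤ k) :
    #{v : {s : Finset α // #s = k} | A ⊆ v.val} = (Fintype.card α - #A).choose (k - #A) := by
  rw [card_filter_subtype_card_eq, card_filter_powersetCard_subset _ _ _ (subset_univ A) hA,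
    card_univ]

lemma card_filter_le_choose_of_forall_subset {ι : Type*} [Fintype ι]
    (p : ι → Prop) [DecidablePred p] {f : ι → {s : Finset α // #s = k}} (hf : Function.Injective f)
    {A : Finset α} (hA : #A ≤ k) (hpA : ∀ i, p i → A ⊆ (f i).val) :
    #{i | p i} ≤ (Fintype.card α - #A).choose (k - #A) :=
  card_filter_subtype_superset hA ▸ card_le_card_of_injOn f
    (fun i hi => mem_filter.mpr ⟨mem_univ _, hpA i (mem_filter.mp hi).2⟩) hf.injOn

lemma card_filter_subtype_disjoint (P : Finset α) :
    #{v : {s : Finset α // #s = k} | Disjoint v.val P} = (Fintype.card α - #P).choose k := by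
  rw [card_filter_subtype_card_eq (Disjoint · P), ← card_compl, ← card_powersetCard]
  congr 1
  ext s
  simp [subset_compl_iff_disjoint_right, and_comm]

end Counting

namespace johnsonGraph

variable {n k : ℕ}

lemma card_lt_of_subset_inter {u v : JV n k} (huv : (johnsonGraph n k).Adj u v)
    {A : Finset (Fin n)} (hA : A ⊆ u.val ∩ v.val) : #A < k := by
  have hk : k ≠ 0 := by
    rintro rfl
    exact huv.1 (Subtype.ext ((card_eq_zero.mp u.prop).trans (card_eq_zero.mp v.prop).symm))
  have := card_le_card hA
  rw [huv.2] at this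
  omega

lemma not_adj_of_subset_of_disjoint {P : Finset (Fin n)} (hP : #P = 2) {u v : JV n k}
    (hu : P ⊆ u.val) (hv : Disjoint v.val P) : ¬ (johnsonGraph n k).Adj u v := by
  intro huv
  have hsub : u.val ∩ v.val ⊆ u.val \ P := fun x hx =>
    mem_sdiff.mpr ⟨(mem_inter.mp hx).1, disjoint_left.mp hv (mem_inter.mp hx).2⟩
  have hPk : 2 ≤ k := by simpa [hP, u.prop] using card_le_card hu
  have := card_le_card hsub
  rw [huv.2, card_sdiff_of_subset hu, u.prop, hP] at this
  omega

lemma exists_adj_inter_eq (v : JV n k) {P : Finset (Fin n)} (he : (v.val \ P).Nonempty)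
    (hf : (v.val ∪ P)ᶜ.Nonempty) :
    ∃ w : JV n k, (johnsonGraph n k).Adj v w ∧ w.val ∩ P = v.val ∩ P := by
  obtain ⟨e, he⟩ := he
  obtain ⟨f, hf⟩ := hf
  simp only [mem_sdiff, mem_compl, mem_union, not_or] at he hf
  have hcard : #(insert f (v.val.erase e)) = k := by
    have := card_pos.mpr ⟨e, he.1⟩
    rw [card_insert_of_notMem fun h => hf.1 (mem_of_mem_erase h), card_erase_of_mem he.1, v.prop]
    omega
  refine ⟨⟨_, hcard⟩, ⟨fun h => hf.1 ?_, ?_⟩, ?_⟩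
  · rw [h]
    exact mem_insert_self f _
  · have hinter : v.val ∩ insert f (v.val.erase e) = v.val.erase e := by
      ext x
      simp only [mem_inter, mem_insert, mem_erase]
      grind
    rw [hinter, card_erase_of_mem he.1, v.prop]
  · ext x
    simp only [mem_inter, mem_insert, mem_erase]
    grind

end johnsonGraph

section PairCut

def pairCut (n k : ℕ) (P : Finset (Fin n)) : Finset (JV n k) := {v | #(v.val ∩ P) = 1}

variable {n k : ℕ} {P : Finset (Fin n)}

@[simp]
lemma mem_pairCut {v : JV n k} : v ∈ pairCut n k P ↔ #(v.val ∩ P) = 1 := by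
  simp [pairCut]

lemma mem_pairCut_compl_iff (hP : #P = 2) {v : JV n k} :
    v ∈ (↑(pairCut n k P) : Set (JV n k))ᶜ ↔ P ⊆ v.val ∨ Disjoint v.val P := by
  simp [← card_inter_ne_one_iff hP]

lemma isVertexCut_pairCut (hP : #P = 2) (hk : 2 ≤ k) (hn : k + 2 ≤ n) :
    IsVertexCut (johnsonGraph n k) ↑(pairCut n k P) := by
  obtain ⟨u, hPu, -, hu⟩ := exists_subsuperset_card_eq (subset_univ P) (hP ▸ hk)
    (by simp; omega)
  obtain ⟨w, hw, hw'⟩ := exists_subset_card_eq (s := Pᶜ) (n := k)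
    (by rw [card_compl, hP, Fintype.card_fin]; omega)
  have hwP : Disjoint w P := subset_compl_iff_disjoint_right.mp hw
  intro hconn
  obtain ⟨walk⟩ := hconn ⟨⟨u, hu⟩, (mem_pairCut_compl_iff hP).mpr (.inl hPu)⟩
    ⟨⟨w, hw'⟩, (mem_pairCut_compl_iff hP).mpr (.inr hwP)⟩
  obtain ⟨x, hx⟩ : P.Nonempty := card_pos.mp (by omega)
  have hPw : ¬ P ⊆ w := fun hPw => disjoint_left.mp hwP (hPw hx) hx
  obtain ⟨d, -, hd₁, hd₂⟩ := walk.exists_boundary_dart {x | P ⊆ x.val.val} hPu hPw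
  have hd := (mem_pairCut_compl_iff hP).mp d.snd.prop
  exact johnsonGraph.not_adj_of_subset_of_disjoint hP hd₁ (hd.resolve_left hd₂) d.adj

lemma isSuperVertexCut_pairCut (hP : #P = 2) (hk : 3 ≤ k) (hn : k + 3 ≤ n) :
    IsSuperVertexCut (johnsonGraph n k) ↑(pairCut n k P) := by
  refine ⟨isVertexCut_pairCut hP (by omega) (by omega), fun v => ?_⟩
  have he : (v.val.val \ P).Nonempty := by
    rw [← card_pos]
    rcases (mem_pairCut_compl_iff hP).mp v.prop with h | h
    · rw [card_sdiff_of_subset h, v.val.prop, hP]; omega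
    · rw [sdiff_eq_self_of_disjoint h, v.val.prop]; omega
  have hf : (v.val.val ∪ P)ᶜ.Nonempty := by
    have := card_union_le v.val.val P
    rw [v.val.prop, hP] at this
    rw [← card_pos, card_compl, Fintype.card_fin]
    omega
  obtain ⟨w, hvw, hwP⟩ := johnsonGraph.exists_adj_inter_eq v.val he hf
  refine ⟨⟨w, ?_⟩, hvw⟩
  have hv := v.prop
  simp only [Set.mem_compl_iff, mem_coe, mem_pairCut] at hv ⊢
  rwa [hwP]

lemma card_pairCut_add (hP : #P = 2) (hk : 2 ≤ k) :
    #(pairCut n k P) + ((n - 2).choose (k - 2) + (n - 2).choose k) = n.choose k := by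
  have hsplit : (univ.filter fun v : JV n k => ¬ #(v.val ∩ P) = 1)
      = univ.filter (fun v : JV n k => P ⊆ v.val) ∪ univ.filter (fun v => Disjoint v.val P) := by
    ext v
    simp [card_inter_ne_one_iff hP]
  have hdisj : Disjoint (univ.filter fun v : JV n k => P ⊆ v.val)
      (univ.filter fun v => Disjoint v.val P) :=
    disjoint_filter.mpr fun v _ hPv hvP => by
      simp [disjoint_self.mp (hvP.mono_left hPv)] at hP
  have := card_filter_add_card_filter_not (s := (univ : Finset (JV n k)))
    (fun v => #(v.val ∩ P) = 1)
  rw [hsplit, card_union_of_disjoint hdisj, card_filter_subtype_superset (hP ▸ hk),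
    card_filter_subtype_disjoint, card_univ, Fintype.card_finset_len] at this
  simpa [hP, pairCut] using this

end PairCut

section SuperVertexCut

variable {V : Type*} {G : SimpleGraph V} {S : Set V}

lemma IsSuperVertexCut.exists_adj_in_component (hS : IsSuperVertexCut G S)
    (C : (G.induce Sᶜ).ConnectedComponent) :
    ∃ x y, (G.induce Sᶜ).Adj x y ∧ (G.induce Sᶜ).connectedComponentMk x = C ∧
      (G.induce Sᶜ).connectedComponentMk y = C := by
  obtain ⟨x, rfl⟩ := C.exists_rep
  obtain ⟨y, hxy⟩ := hS.2 x
  exact ⟨x, y, hxy, rfl, (ConnectedComponent.sound hxy.reachable).symm⟩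

lemma IsSuperVertexCut.exists_adj_outside_component (hS : IsSuperVertexCut G S)
    (C : (G.induce Sᶜ).ConnectedComponent) :
    ∃ x y, (G.induce Sᶜ).Adj x y ∧ (G.induce Sᶜ).connectedComponentMk x ≠ C ∧
      (G.induce Sᶜ).connectedComponentMk y ≠ C := by
  obtain ⟨x, hx⟩ : ∃ x, (G.induce Sᶜ).connectedComponentMk x ≠ C := by
    by_contra! h
    exact hS.1 fun u v => ConnectedComponent.exact ((h u).trans (h v).symm)
  obtain ⟨y, hxy⟩ := hS.2 x
  exact ⟨x, y, hxy, hx, ConnectedComponent.sound hxy.reachable ▸ hx⟩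

end SuperVertexCut

lemma Finset.card_add_card_filter_add_card_filter_not {V : Type*} [Fintype V]
    (S : Finset V) [Fintype ↥(↑S : Set V)ᶜ] (p : ↥(↑S : Set V)ᶜ → Prop) [DecidablePred p] :
    #S + (#{x | p x} + #{x | ¬ p x}) = Fintype.card V := by
  rw [card_filter_add_card_filter_not, card_univ, Fintype.card_compl_set]
  simp [card_le_univ]

theorem exists_elem_omitted_in_both_general (n k : ℕ) (hk : 3 ≤ k) (hn : k + 3 ≤ n)
    (S : Finset (JV n k)) (hS : IsMinSuperVertexCut (johnsonGraph n k) S)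
    (C : ((johnsonGraph n k).induce ((↑S : Set (JV n k))ᶜ)).ConnectedComponent) :
    ∃ r : Fin n,
      (∃ x : ↥((↑S : Set (JV n k))ᶜ),
        ((johnsonGraph n k).induce ((↑S : Set (JV n k))ᶜ)).connectedComponentMk x = C ∧
        r ∉ x.val.val) ∧
      (∃ y : ↥((↑S : Set (JV n k))ᶜ),
        ((johnsonGraph n k).induce ((↑S : Set (JV n k))ᶜ)).connectedComponentMk y ≠ C ∧
        r ∉ y.val.val) := by
  classical
  by_contra! hcon
  let G := (johnsonGraph n k).induce ((↑S : Set (JV n k))ᶜ)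
  obtain ⟨hsuper, hmin⟩ := hS
  set A : Finset (Fin n) := {r | ∀ x, G.connectedComponentMk x = C → r ∈ x.val.val}
  set B : Finset (Fin n) := {r | ∀ y, G.connectedComponentMk y ≠ C → r ∈ y.val.val}
  have hcover : univ ⊆ A ∪ B := fun r _ => by
    simp only [A, B, mem_union, mem_filter, mem_univ, true_and]
    exact or_iff_not_imp_left.mpr fun hr => hcon r (by simpa using hr)
  have hA : #A < k := by
    obtain ⟨x, y, hxy, hx, hy⟩ := hsuper.exists_adj_in_component C
    exact johnsonGraph.card_lt_of_subset_inter hxy fun r hr =>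
      mem_inter.mpr ⟨(mem_filter.mp hr).2 x hx, (mem_filter.mp hr).2 y hy⟩
  have hB : #B < k := by
    obtain ⟨x, y, hxy, hx, hy⟩ := hsuper.exists_adj_outside_component C
    exact johnsonGraph.card_lt_of_subset_inter hxy fun r hr =>
      mem_inter.mpr ⟨(mem_filter.mp hr).2 x hx, (mem_filter.mp hr).2 y hy⟩
  have hCcard := card_filter_le_choose_of_forall_subset (G.connectedComponentMk · = C)
    Subtype.val_injective hA.le fun x hx r hr => (mem_filter.mp hr).2 x hx
  have hCcard' := card_filter_le_choose_of_forall_subset (¬ G.connectedComponentMk · = C)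
    Subtype.val_injective hB.le fun y hy r hr => (mem_filter.mp hr).2 y hy
  have hpart := card_add_card_filter_add_card_filter_not S (G.connectedComponentMk · = C)
  obtain ⟨P, -, hP⟩ := exists_subset_card_eq (s := (univ : Finset (Fin n))) (n := 2) (by simp; omega)
  have hST := hmin _ (isSuperVertexCut_pairCut hP hk hn)
  have hT := card_pairCut_add (k := k) hP (by omega)
  have := Nat.choose_add_choose_lt hk hn hA hB
    (by simpa using (card_le_card hcover).trans (card_union_le A B))
  simp only [Fintype.card_finset_len, Fintype.card_fin] at hpart hCcard hCcard'
  omega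

/-- If `S` is a minimum super vertex-cut of `J(n,k)` (`k ≥ 3`, `n ≥ k+3`),
`C` is a smallest component of `G - S`, and `C*` the union of the remaining
components, then some `r ∈ [n]` is omitted by a vertex of `C` and by a vertex
of `C*`. -/
theorem exists_elem_omitted_in_both (n k : ℕ) (hk : 3 ≤ k) (hn : k + 3 ≤ n)
    (S : Finset (JV n k)) (hS : IsMinSuperVertexCut (johnsonGraph n k) S)
    (C : ((johnsonGraph n k).induce ((↑S : Set (JV n k))ᶜ)).ConnectedComponent)
    (hC : ∀ D : ((johnsonGraph n k).induce ((↑S : Set (JV n k))ᶜ)).ConnectedComponent,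
      {v | ((johnsonGraph n k).induce ((↑S : Set (JV n k))ᶜ)).connectedComponentMk v = C}.ncard ≤
      {v | ((johnsonGraph n k).induce ((↑S : Set (JV n k))ᶜ)).connectedComponentMk v = D}.ncard) :
    ∃ r : Fin n,
      (∃ x : ↥((↑S : Set (JV n k))ᶜ),
        ((johnsonGraph n k).induce ((↑S : Set (JV n k))ᶜ)).connectedComponentMk x = C ∧
        r ∉ x.val.val) ∧
      (∃ y : ↥((↑S : Set (JV n k))ᶜ),
        ((johnsonGraph n k).induce ((↑S : Set (JV n k))ᶜ)).connectedComponentMk y ≠ C ∧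
        r ∉ y.val.val) :=
  exists_elem_omitted_in_both_general n k hk hn S hS C
end

section
/- For all integers k ≥ 3 and n ≥ k+3, the super-connectivity of the Johnson graph J(n,k) is at most (2k−1)(n−k)−k; that is, J(n,k) admits a super vertex-cut of size (2k−1)(n−k)−k. -/
open SimpleGraph Finset

/-!
Take an edge `uv` of `J(n,k)` and delete `S = (N(u) ∪ N(v)) \ {u, v}`. Then `uv` is a component of
what is left, and every other remaining vertex is a `k`-set meeting both `u` and `v` in at most
`k - 2` elements. Such sets exist, and exchanging one element of such a set for another, well
chosen, gives a neighbour of the same kind, so no vertex is isolated. Since `J(n,k)` is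
`k(n-k)`-regular and adjacent vertices have `n - 2` common neighbours,
`|S| = 2k(n-k) - (n-2) - 2 = (2k-1)(n-k) - k`.
-/

namespace Finset

variable {α : Type*} [DecidableEq α]

theorem card_insert_erase_of_mem_of_notMem {C : Finset α} {x y : α} (hx : x ∈ C)
    (hy : y ∉ C) : #(insert y (C.erase x)) = #C := by
  rw [card_insert_of_notMem (fun h => hy (mem_of_mem_erase h)), card_erase_add_one hx]

theorem card_insert_erase_inter_add {C : Finset α} {x y : α} (hx : x ∈ C) (hy : y ∉ C)
    (A : Finset α) :
    #(insert y (C.erase x) ∩ A) + (if x ∈ A then 1 else 0) =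
      #(C ∩ A) + if y ∈ A then 1 else 0 := by
  have hy' : y ∉ (C ∩ A).erase x := fun h => hy (mem_of_mem_inter_left (mem_of_mem_erase h))
  have herase : #((C ∩ A).erase x) + (if x ∈ A then 1 else 0) = #(C ∩ A) := by
    by_cases hxA : x ∈ A
    · rw [if_pos hxA, card_erase_add_one (mem_inter.2 ⟨hx, hxA⟩)]
    · rw [if_neg hxA, erase_eq_of_notMem (fun h => hxA (mem_of_mem_inter_right h)), add_zero]
  by_cases hyA : y ∈ A
  · rw [insert_inter_of_mem hyA, erase_inter, card_insert_of_notMem hy', if_pos hyA, ← herase]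
    ring
  · rw [insert_inter_of_notMem hyA, erase_inter, herase, if_neg hyA, add_zero]

section Fintype

variable [Fintype α]

def johnsonNeighbors (A : Finset α) : Finset (Finset α) :=
  (A ×ˢ Aᶜ).image fun p => insert p.2 (A.erase p.1)

theorem injOn_insert_erase (A : Finset α) :
    Set.InjOn (fun p : α × α => insert p.2 (A.erase p.1)) ↑(A ×ˢ Aᶜ) := by
  rintro ⟨x, y⟩ hp ⟨x', y'⟩ hp' h
  simp only [coe_product, coe_compl, Set.mem_prod, mem_coe, Set.mem_compl_iff] at hp hp' h
  have hy : y = y' := by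
    have := h ▸ mem_insert_self y (A.erase x)
    exact (mem_insert.1 this).resolve_right fun h' => hp.2 (mem_of_mem_erase h')
  have hx : x = x' := by
    by_contra hne
    have := h.symm ▸ mem_insert_of_mem (mem_erase.2 ⟨hne, hp.1⟩)
    rcases mem_insert.1 this with rfl | h'
    · exact hp.2 hp.1
    · exact (mem_erase.1 h').1 rfl
  rw [hx, hy]

theorem insert_erase_mem_johnsonNeighbors {C : Finset α} {x y : α} (hx : x ∈ C)
    (hy : y ∉ C) : insert y (C.erase x) ∈ johnsonNeighbors C :=
  mem_image.2 ⟨(x, y), mem_product.2 ⟨hx, mem_compl.2 hy⟩, rfl⟩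

theorem mem_johnsonNeighbors {A C : Finset α} :
    C ∈ johnsonNeighbors A ↔ #C = #A ∧ #(C ∩ A) + 1 = #A := by
  constructor
  · simp only [johnsonNeighbors, mem_image, mem_product, mem_compl, Prod.exists]
    rintro ⟨x, y, ⟨hx, hy⟩, rfl⟩
    refine ⟨card_insert_erase_of_mem_of_notMem hx hy, ?_⟩
    simpa [hx, hy] using card_insert_erase_inter_add hx hy A
  · rintro ⟨hC, hCA⟩
    have hAC : #(A \ C) = 1 := by
      have := card_sdiff_add_card_inter A C
      rw [inter_comm] at this
      omega
    have hCA' : #(C \ A) = 1 := by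
      have := card_sdiff_add_card_inter C A
      omega
    obtain ⟨x, hx⟩ := card_eq_one.1 hAC
    obtain ⟨y, hy⟩ := card_eq_one.1 hCA'
    have hxA : x ∈ A := (mem_sdiff.1 (hx ▸ mem_singleton_self x)).1
    have hyA : y ∉ A := (mem_sdiff.1 (hy ▸ mem_singleton_self y)).2
    convert insert_erase_mem_johnsonNeighbors hxA hyA
    rw [erase_eq, ← hx, sdiff_sdiff_self_left, insert_eq, ← hy, inter_comm, sdiff_union_inter]

theorem card_johnsonNeighbors (A : Finset α) :
    #(johnsonNeighbors A) = #A * (Fintype.card α - #A) := by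
  rw [johnsonNeighbors, card_image_of_injOn (injOn_insert_erase A), card_product, card_compl]

theorem exists_eq_insert_of_mem_johnsonNeighbors {A B : Finset α}
    (hAB : B ∈ johnsonNeighbors A) :
    ∃ T a b, a ∉ T ∧ b ∉ T ∧ a ≠ b ∧ A = insert a T ∧ B = insert b T := by
  obtain ⟨⟨a, b⟩, hab, rfl⟩ := mem_image.1 hAB
  obtain ⟨ha, hb⟩ := mem_product.1 hab
  rw [mem_compl] at hb
  exact ⟨A.erase a, a, b, notMem_erase a A, fun h => hb (mem_of_mem_erase h),
    fun h => hb (h ▸ ha), (insert_erase ha).symm, rfl⟩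

theorem insert_erase_mem_johnsonNeighbors_iff {A B : Finset α} {x y : α}
    (hAB : B ∈ johnsonNeighbors A) (hx : x ∈ A) (hy : y ∉ A) :
    insert y (A.erase x) ∈ johnsonNeighbors B ↔ (x ∈ B ↔ y ∈ B) := by
  obtain ⟨hB, hAB⟩ := mem_johnsonNeighbors.1 hAB
  have h := card_insert_erase_inter_add hx hy B
  rw [inter_comm] at hAB
  rw [mem_johnsonNeighbors, card_insert_erase_of_mem_of_notMem hx hy]
  by_cases hxB : x ∈ B <;> by_cases hyB : y ∈ B <;> simp [hxB, hyB, hB] at h ⊢ <;> omega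

theorem filter_insert_erase_mem_johnsonNeighbors {A B : Finset α}
    (hAB : B ∈ johnsonNeighbors A) :
    (A ×ˢ Aᶜ).filter (fun p => insert p.2 (A.erase p.1) ∈ johnsonNeighbors B) =
      (A ∩ B) ×ˢ (B \ A) ∪ (A \ B) ×ˢ (A ∪ B)ᶜ := by
  ext ⟨x, y⟩
  simp only [mem_filter, mem_product, mem_compl, mem_union, mem_inter, mem_sdiff]
  by_cases hxy : x ∈ A ∧ y ∉ A
  · rw [insert_erase_mem_johnsonNeighbors_iff hAB hxy.1 hxy.2]
    tauto
  · tauto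

theorem card_johnsonNeighbors_inter {A B : Finset α} (hAB : B ∈ johnsonNeighbors A) :
    #(johnsonNeighbors A ∩ johnsonNeighbors B) = Fintype.card α - 2 := by
  rw [← filter_mem_eq_inter, show johnsonNeighbors A = (A ×ˢ Aᶜ).image _ from rfl,
    filter_image,
    card_image_of_injOn ((injOn_insert_erase A).mono (coe_subset.2 (filter_subset _ _))),
    filter_insert_erase_mem_johnsonNeighbors hAB,
    card_union_of_disjoint (disjoint_product.2 (Or.inl (disjoint_sdiff_inter _ _).symm)),
    card_product, card_product, card_compl]
  obtain ⟨hB, hBA⟩ := mem_johnsonNeighbors.1 hAB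
  have hBA' : #(B \ A) + #(B ∩ A) = #B := card_sdiff_add_card_inter B A
  have hAB' : #(A \ B) + #(B ∩ A) = #A := inter_comm A B ▸ card_sdiff_add_card_inter A B
  have hunion : #(A ∪ B) + #(B ∩ A) = #A + #B :=
    inter_comm A B ▸ card_union_add_card_inter A B
  have := card_le_univ (A ∪ B)
  rw [inter_comm, show #(B \ A) = 1 by omega, show #(A \ B) = 1 by omega]
  omega

theorem exists_card_eq_card_inter_add_two_eq {k : ℕ} {U : Finset α} (hk : 2 ≤ k)
    (hkU : k ≤ #U + 2) (hU : #U + 2 ≤ Fintype.card α) :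
    ∃ C : Finset α, #C = k ∧ #(C ∩ U) + 2 = k := by
  obtain ⟨P, hPU, hP⟩ := exists_subset_card_eq (s := U) (n := k - 2) (by omega)
  obtain ⟨Q, hQU, hQ⟩ := exists_subset_card_eq (s := Uᶜ) (n := 2) (by rw [card_compl]; omega)
  have hQU : Disjoint Q U := subset_compl_iff_disjoint_right.1 hQU
  refine ⟨P ∪ Q, ?_, ?_⟩
  · rw [card_union_of_disjoint (disjoint_of_subset_left hPU hQU.symm), hP, hQ]
    omega
  · rw [union_inter_distrib_right, inter_eq_left.2 hPU, disjoint_iff_inter_eq_empty.1 hQU,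
      union_empty, hP]
    omega

theorem exists_card_inter_insert_add_two_le {k : ℕ} {T : Finset α} {a b : α} (hk : 2 ≤ k)
    (hn : k + 3 ≤ Fintype.card α) (hT : #T + 1 = k) (haT : a ∉ T) (hbT : b ∉ T)
    (hab : a ≠ b) :
    ∃ C : Finset α, #C = k ∧ #(C ∩ insert a T) + 2 ≤ k ∧
      #(C ∩ insert b T) + 2 ≤ k := by
  have hU : #(insert a (insert b T)) = k + 1 := by
    rw [card_insert_of_notMem (by simp [hab, haT]), card_insert_of_notMem hbT, hT]
  obtain ⟨C, hC, hCU⟩ :=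
    exists_card_eq_card_inter_add_two_eq (k := k) (U := insert a (insert b T)) hk (by omega)
      (by omega)
  have hCa := card_le_card (inter_subset_inter_left (s := C)
    (insert_subset_insert a (subset_insert b T)))
  have hCb := card_le_card (inter_subset_inter_left (s := C) (subset_insert a (insert b T)))
  exact ⟨C, hC, by omega, by omega⟩

end Fintype

-- For `k`-sets `A` and `C`, `#(C ∩ A) + 2 ≤ k` says that `C` is neither equal nor adjacent to
-- `A` in `J(n,k)`.

theorem card_inter_insert_of_disjoint {C T : Finset α} (hCT : Disjoint C T) (a : α) :
    #(C ∩ insert a T) = if a ∈ C then 1 else 0 := by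
  by_cases haC : a ∈ C
  · rw [inter_insert_of_mem haC, disjoint_iff_inter_eq_empty.1 hCT, if_pos haC]; rfl
  · rw [inter_insert_of_notMem haC, disjoint_iff_inter_eq_empty.1 hCT, if_neg haC]; rfl

theorem exists_exchange_far_of_disjoint_of_notMem {k : ℕ} {T B C : Finset α} {a : α}
    (hk : 3 ≤ k) (hC : #C = k) (hCT : Disjoint C T) (haC : a ∉ C) (haB : a ∉ B)
    (hCB : #(C ∩ B) + 2 ≤ k) :
    ∃ x ∈ C, ∃ y ∉ C, #(insert y (C.erase x) ∩ insert a T) + 2 ≤ k ∧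
      #(insert y (C.erase x) ∩ B) + 2 ≤ k := by
  obtain ⟨x, hx⟩ : C.Nonempty := card_pos.1 (by omega)
  have hA := card_insert_erase_inter_add hx haC (insert a T)
  have hB := card_insert_erase_inter_add hx haC B
  rw [card_inter_insert_of_disjoint hCT, if_neg haC, if_pos (mem_insert_self a T)] at hA
  rw [if_neg haB] at hB
  refine ⟨x, hx, a, haC, ?_, ?_⟩ <;> split_ifs at hA hB <;> omega

theorem exists_exchange_far_of_disjoint_of_mem {k : ℕ} {T C : Finset α} {a b : α} [Fintype α]
    (hk : 3 ≤ k) (hn : k + 3 ≤ Fintype.card α) (hT : #T + 1 = k) (hC : #C = k)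
    (hCT : Disjoint C T) (haT : a ∉ T) (hab : a ≠ b) (haC : a ∈ C) (hbC : b ∈ C) :
    ∃ x ∈ C, ∃ y ∉ C, #(insert y (C.erase x) ∩ insert a T) + 2 ≤ k ∧
      #(insert y (C.erase x) ∩ insert b T) + 2 ≤ k := by
  -- for `k = 3` the new element must avoid `T`, possible as `#(C ∪ T) ≤ 2k - 1 < card α`
  obtain ⟨y, hyC, hy⟩ : ∃ y ∉ C, 4 ≤ k ∨ y ∉ T := by
    by_cases hk4 : 4 ≤ k
    · obtain ⟨y, -, hy⟩ := exists_mem_notMem_of_card_lt_card (s := C) (t := univ)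
        (by rw [card_univ]; omega)
      exact ⟨y, hy, Or.inl hk4⟩
    · obtain ⟨y, -, hy⟩ := exists_mem_notMem_of_card_lt_card (s := C ∪ T) (t := univ)
        (by rw [card_univ]; have := card_union_le C T; omega)
      exact ⟨y, fun h => hy (mem_union_left T h), Or.inr fun h => hy (mem_union_right C h)⟩
  have hA := card_insert_erase_inter_add haC hyC (insert a T)
  have hB := card_insert_erase_inter_add haC hyC (insert b T)
  have haB : a ∉ insert b T := by simp [hab, haT]
  have hyB : y ∈ insert b T ↔ y ∈ T := by
    rw [mem_insert, or_iff_right]; rintro rfl; exact hyC hbC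
  rw [card_inter_insert_of_disjoint hCT, if_pos haC, if_pos (mem_insert_self a T)] at hA
  rw [card_inter_insert_of_disjoint hCT, if_pos hbC, if_neg haB] at hB
  refine ⟨a, haC, y, hyC, ?_, ?_⟩
  · split_ifs at hA <;> omega
  · rcases hy with hk4 | hyT
    · split_ifs at hB <;> omega
    · rw [if_neg ((not_congr hyB).2 hyT)] at hB
      omega

theorem exists_exchange_far {k : ℕ} {T C : Finset α} {a b : α} [Fintype α]
    (hk : 3 ≤ k) (hn : k + 3 ≤ Fintype.card α) (hT : #T + 1 = k) (ha : a ∉ T) (hb : b ∉ T)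
    (hab : a ≠ b) (hC : #C = k) (hCa : #(C ∩ insert a T) + 2 ≤ k)
    (hCb : #(C ∩ insert b T) + 2 ≤ k) :
    ∃ x ∈ C, ∃ y ∉ C, #(insert y (C.erase x) ∩ insert a T) + 2 ≤ k ∧
      #(insert y (C.erase x) ∩ insert b T) + 2 ≤ k := by
  by_cases hCT : Disjoint C T
  · by_cases haC : a ∈ C
    · by_cases hbC : b ∈ C
      · exact exists_exchange_far_of_disjoint_of_mem hk hn hT hC hCT ha hab haC hbC
      · obtain ⟨x, hx, y, hy, hb', ha'⟩ :=
          exists_exchange_far_of_disjoint_of_notMem hk hC hCT hbC (by simp [Ne.symm hab, hb]) hCa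
        exact ⟨x, hx, y, hy, ha', hb'⟩
    · exact exists_exchange_far_of_disjoint_of_notMem hk hC hCT haC
        (by simp [hab, ha]) hCb
  · obtain ⟨x, hxC, hxT⟩ := not_disjoint_iff.1 hCT
    obtain ⟨y, -, hy⟩ := exists_mem_notMem_of_card_lt_card (s := C) (t := univ)
      (by rw [card_univ]; omega)
    have hA := card_insert_erase_inter_add hxC hy (insert a T)
    have hB := card_insert_erase_inter_add hxC hy (insert b T)
    rw [if_pos (mem_insert_of_mem hxT)] at hA hB
    refine ⟨x, hxC, y, hy, ?_, ?_⟩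
    · split_ifs at hA <;> omega
    · split_ifs at hB <;> omega

end Finset

namespace SimpleGraph

variable {V : Type*} (G : SimpleGraph V)

theorem not_preconnected_of_adj_closed (W : Set V) (hW : ∀ x y, G.Adj x y → x ∈ W → y ∈ W)
    {x y : V} (hx : x ∈ W) (hy : y ∉ W) : ¬G.Preconnected := fun h => by
  obtain ⟨p⟩ := h x y
  obtain ⟨d, -, hd, hd'⟩ := p.exists_boundary_dart W hx hy
  exact hd' (hW _ _ d.adj hd)

theorem isSuperVertexCut_of_adj {u v : V} (huv : G.Adj u v)
    (hfar : ∃ w, (u ≠ w ∧ ¬G.Adj u w) ∧ (v ≠ w ∧ ¬G.Adj v w))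
    (hext : ∀ w, (u ≠ w ∧ ¬G.Adj u w) ∧ (v ≠ w ∧ ¬G.Adj v w) →
      ∃ w', G.Adj w w' ∧ (u ≠ w' ∧ ¬G.Adj u w') ∧ (v ≠ w' ∧ ¬G.Adj v w')) :
    IsSuperVertexCut G ((G.neighborSet u ∪ G.neighborSet v) \ {u, v}) := by
  set S := (G.neighborSet u ∪ G.neighborSet v) \ {u, v}
  have hmem : ∀ w, w ∈ Sᶜ ↔
      w = u ∨ w = v ∨ (u ≠ w ∧ ¬G.Adj u w) ∧ (v ≠ w ∧ ¬G.Adj v w) := by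
    intro w
    simp only [S, Set.mem_compl_iff, Set.mem_sdiff, Set.mem_union, mem_neighborSet,
      Set.mem_insert_iff, Set.mem_singleton_iff]
    tauto
  have hu : u ∈ Sᶜ := (hmem u).2 (Or.inl rfl)
  have hv : v ∈ Sᶜ := (hmem v).2 (Or.inr (Or.inl rfl))
  have hfar_mem : ∀ w, (u ≠ w ∧ ¬G.Adj u w) ∧ (v ≠ w ∧ ¬G.Adj v w) → w ∈ Sᶜ :=
    fun w hw => (hmem w).2 (Or.inr (Or.inr hw))
  refine ⟨fun hconn => ?_, fun w => ?_⟩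
  · obtain ⟨w, hw⟩ := hfar
    refine (G.induce Sᶜ).not_preconnected_of_adj_closed {x | x.1 = u ∨ x.1 = v} ?_
      (x := ⟨u, hu⟩) (y := ⟨w, hfar_mem w hw⟩) (Or.inl rfl) ?_ hconn
    · rintro x y hxy hx
      rw [induce_adj] at hxy
      rcases (hmem y).1 y.2 with h | h | ⟨⟨-, hyu⟩, -, hyv⟩
      · exact Or.inl h
      · exact Or.inr h
      · rcases hx with hx | hx <;> rw [hx] at hxy
        exacts [(hyu hxy).elim, (hyv hxy).elim]
    · rintro (h | h)
      exacts [hw.1.1 h.symm, hw.2.1 h.symm]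
  · obtain ⟨w, hw⟩ := w
    rcases (hmem w).1 hw with rfl | rfl | hw
    · exact ⟨⟨v, hv⟩, huv⟩
    · exact ⟨⟨u, hu⟩, huv.symm⟩
    · obtain ⟨w', hww', hw'⟩ := hext w hw
      exact ⟨⟨w', hfar_mem w' hw'⟩, hww'⟩

theorem card_sdiff_pair_add_card_inter [Fintype V] [DecidableEq V] [DecidableRel G.Adj]
    {u v : V} (huv : G.Adj u v) :
    #((G.neighborFinset u ∪ G.neighborFinset v) \ {u, v}) +
      #(G.neighborFinset u ∩ G.neighborFinset v) + 2 = G.degree u + G.degree v := by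
  have hsub : {u, v} ⊆ G.neighborFinset u ∪ G.neighborFinset v := by
    simp [insert_subset_iff, huv, huv.symm]
  have h2 := card_pair huv.ne ▸ card_le_card hsub
  rw [card_sdiff_of_subset hsub, card_pair huv.ne, ← card_neighborFinset_eq_degree,
    ← card_neighborFinset_eq_degree, ← card_union_add_card_inter]
  omega

end SimpleGraph

instance (n k : ℕ) : DecidableRel (johnsonGraph n k).Adj :=
  fun u v => inferInstanceAs (Decidable (u ≠ v ∧ (u.val ∩ v.val).card = k - 1))

section Johnson

variable {n k : ℕ}

theorem JV.card_inter_le (u w : JV n k) : #(u.val ∩ w.val) ≤ k :=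
  (card_le_card inter_subset_left).trans_eq u.2

theorem JV.eq_iff_card_inter {u w : JV n k} : u = w ↔ #(u.val ∩ w.val) = k := by
  refine ⟨fun h => by rw [h, inter_self, w.2], fun h => Subtype.ext ?_⟩
  have huw : u.val ∩ w.val = u.val := eq_of_subset_of_card_le inter_subset_left (by rw [h, u.2])
  exact eq_of_subset_of_card_le (inter_eq_left.1 huw) (by rw [u.2, w.2])

theorem johnsonGraph_adj_iff {u w : JV n k} :
    (johnsonGraph n k).Adj u w ↔ w.val ∈ johnsonNeighbors u.val := by
  have := u.card_inter_le w
  rw [mem_johnsonNeighbors, u.2, w.2, inter_comm]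
  change u ≠ w ∧ _ ↔ _
  rw [Ne, JV.eq_iff_card_inter]
  omega

theorem johnsonGraph_ne_and_not_adj_iff {u w : JV n k} :
    (u ≠ w ∧ ¬(johnsonGraph n k).Adj u w) ↔ #(w.val ∩ u.val) + 2 ≤ k := by
  have := u.card_inter_le w
  change u ≠ w ∧ ¬(u ≠ w ∧ _) ↔ _
  rw [Ne, JV.eq_iff_card_inter, inter_comm w.val]
  omega

theorem johnsonGraph_map_neighborFinset (u : JV n k) :
    ((johnsonGraph n k).neighborFinset u).map (Function.Embedding.subtype _) =
      johnsonNeighbors u.val := by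
  ext C
  simp only [mem_map, mem_neighborFinset, johnsonGraph_adj_iff, Function.Embedding.coe_subtype]
  refine ⟨fun ⟨w, hw, hwC⟩ => hwC ▸ hw, fun hC => ?_⟩
  exact ⟨⟨C, (mem_johnsonNeighbors.1 hC).1.trans u.2⟩, hC, rfl⟩

theorem johnsonGraph_degree (u : JV n k) : (johnsonGraph n k).degree u = k * (n - k) := by
  rw [← card_neighborFinset_eq_degree, ← card_map, johnsonGraph_map_neighborFinset,
    card_johnsonNeighbors, u.2, Fintype.card_fin]

theorem johnsonGraph_card_neighborFinset_inter {u v : JV n k}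
    (huv : (johnsonGraph n k).Adj u v) :
    #((johnsonGraph n k).neighborFinset u ∩ (johnsonGraph n k).neighborFinset v) = n - 2 := by
  rw [← card_map (Function.Embedding.subtype _), map_inter, johnsonGraph_map_neighborFinset,
    johnsonGraph_map_neighborFinset,
    card_johnsonNeighbors_inter (johnsonGraph_adj_iff.1 huv), Fintype.card_fin]

theorem johnsonGraph_card_sdiff_pair {u v : JV n k} (huv : (johnsonGraph n k).Adj u v) :
    #(((johnsonGraph n k).neighborFinset u ∪ (johnsonGraph n k).neighborFinset v) \ {u, v}) =
      (2 * k - 1) * (n - k) - k := by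
  have h := (johnsonGraph n k).card_sdiff_pair_add_card_inter huv
  have hdeg := ((johnsonGraph n k).degree_pos_iff_exists_adj u).2 ⟨v, huv⟩
  rw [johnsonGraph_card_neighborFinset_inter huv, johnsonGraph_degree, johnsonGraph_degree] at h
  rw [johnsonGraph_degree] at hdeg
  have hk : 0 < k := Nat.pos_of_mul_pos_right hdeg
  have hnk : 0 < n - k := Nat.pos_of_mul_pos_left hdeg
  obtain ⟨m, rfl⟩ : ∃ m, n = k + m := ⟨n - k, by omega⟩
  rw [Nat.add_sub_cancel_left] at *
  rw [Nat.sub_mul, one_mul, mul_assoc]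
  omega

theorem johnsonGraph_exists_adj (hk : 0 < k) (hn : k < n) :
    ∃ u v : JV n k, (johnsonGraph n k).Adj u v := by
  obtain ⟨A, -, hA⟩ := exists_subset_card_eq (s := (univ : Finset (Fin n))) (n := k)
    (by rw [card_univ, Fintype.card_fin]; omega)
  obtain ⟨x, hx⟩ : A.Nonempty := card_pos.1 (by omega)
  obtain ⟨y, -, hy⟩ := exists_mem_notMem_of_card_lt_card (s := A) (t := univ)
    (by rw [card_univ, Fintype.card_fin]; omega)
  exact ⟨⟨A, hA⟩, ⟨_, (card_insert_erase_of_mem_of_notMem hx hy).trans hA⟩,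
    johnsonGraph_adj_iff.2 (insert_erase_mem_johnsonNeighbors hx hy)⟩

theorem johnsonGraph_isSuperVertexCut (hk : 3 ≤ k) (hn : k + 3 ≤ n) {u v : JV n k}
    (huv : (johnsonGraph n k).Adj u v) :
    IsSuperVertexCut (johnsonGraph n k)
      ↑(((johnsonGraph n k).neighborFinset u ∪ (johnsonGraph n k).neighborFinset v) \
        {u, v}) := by
  obtain ⟨T, a, b, haT, hbT, hab, hu, hv⟩ :=
    exists_eq_insert_of_mem_johnsonNeighbors (johnsonGraph_adj_iff.1 huv)
  have hT : #T + 1 = k := by rw [← card_insert_of_notMem haT, ← hu, u.2]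
  have hn' : k + 3 ≤ Fintype.card (Fin n) := by rwa [Fintype.card_fin]
  rw [coe_sdiff, coe_union, coe_neighborFinset, coe_neighborFinset, coe_pair]
  refine (johnsonGraph n k).isSuperVertexCut_of_adj huv ?_ ?_ <;>
    simp only [johnsonGraph_ne_and_not_adj_iff, hu, hv]
  · obtain ⟨C, hC, hCa, hCb⟩ :=
      exists_card_inter_insert_add_two_le (by omega) hn' hT haT hbT hab
    exact ⟨⟨C, hC⟩, hCa, hCb⟩
  · rintro w ⟨hwa, hwb⟩
    obtain ⟨x, hx, y, hy, h⟩ :=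
      exists_exchange_far hk hn' hT haT hbT hab w.2 hwa hwb
    exact ⟨⟨_, (card_insert_erase_of_mem_of_notMem hx hy).trans w.2⟩,
      johnsonGraph_adj_iff.2 (insert_erase_mem_johnsonNeighbors hx hy), h⟩

end Johnson

/-- For `k ≥ 3` and `n ≥ k+3`, `κ'(J(n,k)) ≤ (2k-1)(n-k) - k`: the Johnson
graph admits a super vertex-cut of this size. -/
theorem superConnectivity_johnson_le (n k : ℕ) (hk : 3 ≤ k) (hn : k + 3 ≤ n) :
    superConnectivity (johnsonGraph n k) ≤ (((2 * k - 1) * (n - k) - k : ℕ) : ℕ∞) ∧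
    ∃ S : Finset (JV n k),
      IsSuperVertexCut (johnsonGraph n k) ↑S ∧ S.card = (2 * k - 1) * (n - k) - k := by
  obtain ⟨u, v, huv⟩ := johnsonGraph_exists_adj (n := n) (k := k) (by omega) (by omega)
  have hS := johnsonGraph_isSuperVertexCut hk hn huv
  have hcard := johnsonGraph_card_sdiff_pair huv
  exact ⟨sInf_le ⟨_, hS, by rw [hcard]⟩, _, hS, hcard⟩
end

section
/- Let k ≥ 3 and n ≥ k+3 be integers, let S be a minimum super vertex-cut of the Johnson graph G = J(n,k), and let r ∈ [n]. If there exists a vertex x of G−S with r ∉ x such that every neighbour of x in G−S contains r (equivalently, N_{G−S}(x) − β_r = ∅), then |S| ≥ (2k−1)(n−k)−k. -/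
open SimpleGraph Finset

/-!
The `k (n - k - 1)` neighbours `x - i + c` of `x` with `c ≠ r` avoid `r`, so they all lie in `S`;
it remains to find `(k - 1)(n - k)` further elements of `S`.

If two surviving sets through `r` are disconnected, removing `r` from them leaves sets that are
disconnected in `J([n] - r, k - 1)` minus the link of `r` in `S`; as `J(m, l)` is
`l (m - l)`-connected, that link has at least `(k - 1)(n - k)` members. Otherwise some component `W`
of `J(n, k) - S` not containing `x` avoids `r`. Then `s + r` lies in `S` for every `s` in the shadow
of `W`, and so does every neighbour of `W` outside `W` that avoids `r` and meets `x` in at most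
`k - 2` points, hence is not among the neighbours above. A lower bound on shadow plus such
boundary for connected families of `k`-sets, proved by induction on the ground set, gives
`(k - 1)(n - k)` of them.
-/

open scoped FinsetFamily

lemma SimpleGraph.Connected.exists_adj_of_induce {β : Type*} {G : SimpleGraph β} {V W : Finset β}
    (hW : (G.induce (W : Set β)).Connected) (hVW : V ⊆ W) (hV : V.Nonempty) (hWV : ¬ W ⊆ V) :
    ∃ u ∈ V, ∃ v ∈ W, v ∉ V ∧ G.Adj u v := by
  obtain ⟨u, hu⟩ := hV
  obtain ⟨v, hvW, hvV⟩ := not_subset.1 hWV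
  obtain ⟨p⟩ := hW.preconnected ⟨u, hVW hu⟩ ⟨v, hvW⟩
  obtain ⟨d, -, hd₁, hd₂⟩ := p.exists_boundary_dart {x | x.1 ∈ V} hu hvV
  exact ⟨_, hd₁, _, d.snd.2, hd₂, d.adj⟩

lemma SimpleGraph.connected_induce_of_forall_reachable {β : Type*} {G H : SimpleGraph β}
    {W : Finset β} {w : β} (hW : ∀ v, v ∈ W ↔ H.Reachable w v) (hHG : H ≤ G) :
    (G.induce (W : Set β)).Connected := by
  have hC : (W : Set β) = (H.connectedComponentMk w).supp := by
    ext v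
    rw [mem_coe, hW, ConnectedComponent.mem_supp_iff, ConnectedComponent.eq]
    exact ⟨Reachable.symm, Reachable.symm⟩
  rw [hC]
  exact (ConnectedComponent.maximal_connected_induce_supp _).1.mono (comap_monotone _ hHG)

namespace Johnson

variable {α : Type*} [DecidableEq α]

/-- `J(α, l)`, placed on all of `Finset α`: sets of size other than `l` are isolated. -/
def graph (l : ℕ) : SimpleGraph (Finset α) where
  Adj s t := #s = l ∧ #t = l ∧ #(s ∩ t) = l - 1 ∧ s ≠ t
  symm := ⟨fun _ _ h => ⟨h.2.1, h.1, by rw [inter_comm]; exact h.2.2.1, h.2.2.2.symm⟩⟩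
  loopless := ⟨fun _ h => h.2.2.2 rfl⟩

instance (l : ℕ) : DecidableRel (graph (α := α) l).Adj := fun s t =>
  inferInstanceAs (Decidable (#s = l ∧ #t = l ∧ #(s ∩ t) = l - 1 ∧ s ≠ t))

/-- `J(U, l) - T`, again on all of `Finset α`: only the sets in `U.powersetCard l \ T` have
neighbours. -/
def minus (U : Finset α) (l : ℕ) (T : Finset (Finset α)) : SimpleGraph (Finset α) where
  Adj s t := (graph l).Adj s t ∧ s ⊆ U ∧ t ⊆ U ∧ s ∉ T ∧ t ∉ T
  symm := ⟨fun _ _ h => ⟨h.1.symm, h.2.2.1, h.2.1, h.2.2.2.2, h.2.2.2.1⟩⟩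
  loopless := ⟨fun _ h => h.1.ne rfl⟩

variable {U x y z w w' s t u v I C J : Finset α} {l k : ℕ} {T V W F : Finset (Finset α)}
  {i c e j r : α}

lemma card_inter_lt (hs : #s = l) (ht : #t = l) (hst : s ≠ t) : #(s ∩ t) < l := by
  refine lt_of_le_of_ne (hs ▸ card_le_card inter_subset_left) fun h => hst ?_
  have hsub : s ⊆ t := by
    rw [← eq_of_subset_of_card_le (inter_subset_left (s₁ := s) (s₂ := t)) (by omega)]
    exact inter_subset_right
  exact eq_of_subset_of_card_le hsub (by omega)

lemma inter_insert_erase (hc : c ∉ s) : s ∩ insert c (s.erase i) = s.erase i := by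
  rw [inter_insert_of_notMem hc, inter_eq_right.2 (erase_subset i s)]

lemma card_insert_erase (hi : i ∈ s) (hc : c ∉ s) : #(insert c (s.erase i)) = #s := by
  rw [card_insert_of_notMem (fun h => hc (mem_of_mem_erase h)), card_erase_add_one hi]

lemma graph_adj_swap (hs : #s = l) (hi : i ∈ s) (hc : c ∉ s) :
    (graph l).Adj s (insert c (s.erase i)) :=
  ⟨hs, by rw [card_insert_erase hi hc, hs],
    by rw [inter_insert_erase hc, card_erase_of_mem hi, hs],
    fun h => hc (h ▸ mem_insert_self c _)⟩

lemma graph_adj_of_card_union_le (hs : #s = l) (ht : #t = l) (hst : s ≠ t)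
    (h : #(s ∪ t) ≤ l + 1) : (graph l).Adj s t := by
  have := card_union_add_card_inter s t
  have := card_inter_lt hs ht hst
  exact ⟨hs, ht, by omega, hst⟩

lemma minus_adj_swap (hsU : s ⊆ U) (hs : #s = l) (hsT : s ∉ T) (hi : i ∈ s) (hcU : c ∈ U)
    (hc : c ∉ s) (hT : insert c (s.erase i) ∉ T) : (minus U l T).Adj s (insert c (s.erase i)) :=
  ⟨graph_adj_swap hs hi hc, hsU, insert_subset hcU ((erase_subset i s).trans hsU), hsT, hT⟩

lemma mem_of_reachable (h : (minus U l T).Reachable s t) (hs : s ∈ U.powersetCard l \ T) :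
    t ∈ U.powersetCard l \ T := by
  induction (reachable_iff_reflTransGen s t).1 h with
  | refl => exact hs
  | tail _ hadj =>
    exact mem_sdiff.2 ⟨mem_powersetCard.2 ⟨hadj.2.2.1, hadj.1.2.1⟩, hadj.2.2.2.2⟩

lemma minus_erase_le (e : α) : minus (U.erase e) l (T.nonMemberSubfamily e) ≤ minus U l T :=
  fun _ _ ⟨hadj, hsU, htU, hsT, htT⟩ =>
    ⟨hadj, hsU.trans (erase_subset e U), htU.trans (erase_subset e U),
      fun h => hsT (mem_nonMemberSubfamily.2 ⟨h, fun he => notMem_erase e U (hsU he)⟩),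
      fun h => htT (mem_nonMemberSubfamily.2 ⟨h, fun he => notMem_erase e U (htU he)⟩)⟩

/-- `T.memberSubfamily e` is the link of `e` in `T`, and `T.nonMemberSubfamily e` its
deletion. -/
def insertHom {e : α} (he : e ∈ U) :
    minus (U.erase e) l (T.memberSubfamily e) →g minus U (l + 1) T where
  toFun := insert e
  map_rel' := by
    rintro s t ⟨⟨hs, ht, hst, hne⟩, hsU, htU, hsT, htT⟩
    have hes : e ∉ s := fun he => notMem_erase e U (hsU he)
    have het : e ∉ t := fun he => notMem_erase e U (htU he)
    have hl : l ≠ 0 := by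
      rintro rfl
      exact hne (by rw [card_eq_zero.1 hs, card_eq_zero.1 ht])
    refine ⟨⟨?_, ?_, ?_, ?_⟩, ?_, ?_, ?_, ?_⟩
    · rw [card_insert_of_notMem hes, hs]
    · rw [card_insert_of_notMem het, ht]
    · rw [← insert_inter_distrib, card_insert_of_notMem (fun h => hes (mem_inter.1 h).1), hst]
      omega
    · exact fun h => hne (by rw [← erase_insert hes, h, erase_insert het])
    · exact insert_subset he (hsU.trans (erase_subset e U))
    · exact insert_subset he (htU.trans (erase_subset e U))
    · exact fun h => hsT (mem_memberSubfamily.2 ⟨h, hes⟩)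
    · exact fun h => htT (mem_memberSubfamily.2 ⟨h, het⟩)

def swaps (s I C : Finset α) : Finset (Finset α) :=
  (I ×ˢ C).image fun p => insert p.2 (s.erase p.1)

lemma mem_swaps : t ∈ swaps s I C ↔ ∃ i ∈ I, ∃ c ∈ C, insert c (s.erase i) = t := by
  simp only [swaps, mem_image, mem_product, Prod.exists, and_assoc, exists_and_left]

lemma card_swaps (hI : I ⊆ s) (hC : Disjoint s C) : #(swaps s I C) = #I * #C := by
  rw [swaps, card_image_of_injOn, card_product]
  rintro ⟨i, c⟩ hic ⟨i', c'⟩ hic' h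
  simp only [coe_product, Set.mem_prod, mem_coe] at hic hic' h
  have key : ∀ i ∈ I, ∀ c ∈ C,
      insert c (s.erase i) \ s = {c} ∧ s \ insert c (s.erase i) = {i} := by
    intro i hi c hc
    have hcs : c ∉ s := disjoint_right.1 hC hc
    constructor
    · ext a; simp only [mem_sdiff, mem_insert, mem_erase, mem_singleton]; grind
    · ext a; simp only [mem_sdiff, mem_insert, mem_erase, mem_singleton]; grind [hI hi]
  obtain ⟨h1, h2⟩ := key i hic.1 c hic.2
  obtain ⟨h1', h2'⟩ := key i' hic'.1 c' hic'.2
  rw [h] at h1 h2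
  rw [h1, singleton_inj] at h1'
  rw [h2, singleton_inj] at h2'
  rw [h1', h2']

lemma swaps_subset (hs : s ∈ U.powersetCard l \ T) (hI : I ⊆ s) (hC : C ⊆ U \ s)
    (h : ∀ t ∈ swaps s I C, ¬ (minus U l T).Adj s t) : swaps s I C ⊆ T := by
  simp only [mem_sdiff, mem_powersetCard] at hs
  intro t ht
  obtain ⟨i, hi, c, hc, rfl⟩ := mem_swaps.1 ht
  obtain ⟨hcU, hcs⟩ := mem_sdiff.1 (hC hc)
  by_contra hT
  exact h _ ht (minus_adj_swap hs.1.1 hs.1.2 hs.2 (hI hi) hcU hcs hT)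

lemma erase_mem_link (hs : s ∈ U.powersetCard (l + 1) \ T) (he : e ∈ s) :
    s.erase e ∈ (U.erase e).powersetCard l \ T.memberSubfamily e := by
  simp only [mem_sdiff, mem_powersetCard, mem_memberSubfamily, insert_erase he] at hs ⊢
  exact ⟨⟨erase_subset_erase e hs.1.1, by rw [card_erase_of_mem he, hs.1.2]; rfl⟩,
    fun h => hs.2 h.1⟩

lemma mem_deletion (hs : s ∈ U.powersetCard l \ T) (he : e ∉ s) :
    s ∈ (U.erase e).powersetCard l \ T.nonMemberSubfamily e := by
  simp only [mem_sdiff, mem_powersetCard, mem_nonMemberSubfamily] at hs ⊢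
  exact ⟨⟨subset_erase.2 ⟨hs.1.1, he⟩, hs.1.2⟩, fun h => hs.2 h.1⟩

lemma not_reachable_link (he : e ∈ U) (hs : e ∈ s) (ht : e ∈ t)
    (h : ¬ (minus U (l + 1) T).Reachable s t) :
    ¬ (minus (U.erase e) l (T.memberSubfamily e)).Reachable (s.erase e) (t.erase e) := fun h' => by
  have := h'.map (insertHom he)
  simp only [insertHom, RelHom.coeFn_mk, insert_erase hs, insert_erase ht] at this
  exact h this

lemma not_reachable_deletion (h : ¬ (minus U l T).Reachable s t) :
    ¬ (minus (U.erase e) l (T.nonMemberSubfamily e)).Reachable s t :=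
  fun h' => h (h'.mono (minus_erase_le e))

lemma card_sdiff_le_card_nonMemberSubfamily (hs : s ∈ U.powersetCard l \ T) (he : e ∈ s)
    (h : ∀ t, (minus U l T).Adj s t → e ∈ t) : #(U \ s) ≤ #(T.nonMemberSubfamily e) := by
  have hswap : ∀ t ∈ swaps s {e} (U \ s), e ∉ t := by
    intro t ht
    obtain ⟨i, hi, c, hc, rfl⟩ := mem_swaps.1 ht
    rw [mem_singleton.1 hi]
    simp only [mem_insert, mem_erase, ne_eq, not_true_eq_false, false_and, or_false]
    rintro rfl
    exact (mem_sdiff.1 hc).2 he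
  calc #(U \ s) = #(swaps s {e} (U \ s)) := by
        rw [card_swaps (singleton_subset_iff.2 he) disjoint_sdiff, card_singleton, one_mul]
    _ ≤ _ := card_le_card fun t ht => mem_nonMemberSubfamily.2
        ⟨swaps_subset hs (singleton_subset_iff.2 he) subset_rfl
          (fun t ht hst => hswap t ht (h t hst)) ht, hswap t ht⟩

lemma card_le_card_memberSubfamily (hs : s ∈ U.powersetCard l \ T) (heU : e ∈ U) (he : e ∉ s)
    (h : ∀ t, (minus U l T).Adj s t → e ∉ t) : #s ≤ #(T.memberSubfamily e) := by
  simp only [mem_sdiff, mem_powersetCard] at hs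
  calc #s = #(s.image s.erase) := (card_image_of_injOn (erase_injOn s)).symm
    _ ≤ _ := card_le_card fun t ht => by
      obtain ⟨j, hj, rfl⟩ := mem_image.1 ht
      refine mem_memberSubfamily.2 ⟨?_, fun h => he (mem_of_mem_erase h)⟩
      by_contra hT
      exact h _ (minus_adj_swap hs.1.1 hs.1.2 hs.2 hj heU he hT) (mem_insert_self e _)

lemma mul_card_sdiff_le_of_forall_not_adj (hs : s ∈ U.powersetCard l \ T)
    (h : ∀ t, ¬ (minus U l T).Adj s t) : #s * #(U \ s) ≤ #T := by
  rw [← card_swaps subset_rfl disjoint_sdiff]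
  exact card_le_card (swaps_subset hs subset_rfl subset_rfl fun t _ => h t)

/-- Induction on `U`. Unless `a` is isolated, with all its swaps deleted, take `e ∈ v \ a` for a
neighbour `v` of `a`. The component of `b` is separated from `v` among the sets through `e` (a copy
of `J(U - e, l - 1)` minus the link) and from `a` among the sets avoiding `e` (a copy of
`J(U - e, l)` minus the deletion); if it lies on one side only, deleted swaps of `b` make up for
the missing bound. -/
theorem mul_le_card_of_not_reachable {a b : Finset α} (ha : a ∈ U.powersetCard l \ T)
    (hb : b ∈ U.powersetCard l \ T) (hab : ¬ (minus U l T).Reachable a b) :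
    l * (#U - l) ≤ #T := by
  induction U using Finset.strongInduction generalizing l T a b with
  | H U ih =>
  obtain ⟨⟨haU, hal⟩, haT⟩ := mem_sdiff.1 ha |>.imp_left mem_powersetCard.1
  obtain ⟨⟨hbU, hbl⟩, hbT⟩ := mem_sdiff.1 hb |>.imp_left mem_powersetCard.1
  have hne : a ≠ b := by rintro rfl; exact hab .rfl
  have hunion : l + 2 ≤ #(a ∪ b) := by
    by_contra! h
    exact hab (Adj.reachable
      ⟨graph_adj_of_card_union_le hal hbl hne (by omega), haU, hbU, haT, hbT⟩)
  have hUl : #(a ∪ b) ≤ #U := card_le_card (union_subset haU hbU)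
  have hl : 2 ≤ l := by have := card_union_le a b; omega
  by_cases hiso : ∀ t, ¬ (minus U l T).Adj a t
  · rw [← hal, ← card_sdiff_of_subset haU]
    exact mul_card_sdiff_le_of_forall_not_adj ha hiso
  push Not at hiso
  obtain ⟨v, hav⟩ := hiso
  obtain ⟨e, hev, hea⟩ : ∃ e ∈ v, e ∉ a := not_subset.1 fun h =>
    hav.1.ne (eq_of_subset_of_card_le h (by rw [hav.1.1, hav.1.2.1])).symm
  have heU : e ∈ U := hav.2.2.1 hev
  have hv : v ∈ U.powersetCard l \ T := mem_of_reachable hav.reachable ha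
  obtain ⟨m, rfl⟩ : ∃ m, l = m + 1 := ⟨l - 1, by omega⟩
  obtain ⟨q, hq⟩ : ∃ q, #U = m + 3 + q := ⟨#U - (m + 3), by omega⟩
  have hcardU : #(U.erase e) = m + 2 + q := by rw [card_erase_of_mem heU, hq]; omega
  set H := minus U (m + 1) T
  have link_bound (d) (hbd : H.Reachable b d) (hed : e ∈ d) :
      m * (q + 2) ≤ #(T.memberSubfamily e) := by
    have := ih (U.erase e) (erase_ssubset heU) (erase_mem_link hv hev)
      (erase_mem_link (mem_of_reachable hbd hb) hed)
      (not_reachable_link heU hev hed fun hvd => hab (hav.reachable.trans (hvd.trans hbd.symm)))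
    rwa [hcardU, show m + 2 + q - m = q + 2 by omega] at this
  have deletion_bound (d) (hbd : H.Reachable b d) (hed : e ∉ d) :
      (m + 1) * (q + 1) ≤ #(T.nonMemberSubfamily e) := by
    have := ih (U.erase e) (erase_ssubset heU) (mem_deletion ha hea)
      (mem_deletion (mem_of_reachable hbd hb) hed)
      (not_reachable_deletion fun had => hab (had.trans hbd.symm))
    rwa [hcardU, show m + 2 + q - (m + 1) = q + 1 by omega] at this
  rw [← card_memberSubfamily_add_card_nonMemberSubfamily e T, hq,
    show m + 3 + q - (m + 1) = q + 2 by omega]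
  by_cases hin : ∃ d, H.Reachable b d ∧ e ∈ d
  · obtain ⟨d, hbd, hed⟩ := hin
    have h1 := link_bound d hbd hed
    by_cases hout : ∃ d, H.Reachable b d ∧ e ∉ d
    · obtain ⟨d', hbd', hed'⟩ := hout
      have h2 := deletion_bound d' hbd' hed'
      nlinarith
    push Not at hout
    have h2 := card_sdiff_le_card_nonMemberSubfamily hb (hout b .rfl) fun t hbt =>
      hout t hbt.reachable
    rw [card_sdiff_of_subset hbU, hbl, hq, show m + 3 + q - (m + 1) = q + 2 by omega] at h2
    nlinarith
  push Not at hin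
  have h1 := deletion_bound b .rfl (hin b .rfl)
  have h2 := card_le_card_memberSubfamily hb heU (hin b .rfl) fun t hbt => hin t hbt.reachable
  rw [hbl] at h2
  nlinarith

lemma card_shadow_singleton (s : Finset α) : #(∂ {s}) = #s := by
  rw [shadow, sup_singleton, card_image_of_injOn (erase_injOn s)]

lemma two_mul_sub_one_le_card_shadow (hW : ∀ w ∈ W, #w = l) (h : 1 < #W) :
    2 * l - 1 ≤ #(∂ W) := by
  obtain ⟨w, hw, w', hw', hne⟩ := one_lt_card.1 h
  have hsub : ∂ {w} ∪ ∂ {w'} ⊆ ∂ W :=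
    union_subset (shadow_mono (singleton_subset_iff.2 hw))
      (shadow_mono (singleton_subset_iff.2 hw'))
  have hinter : ∂ {w} ∩ ∂ {w'} ⊆ {w ∩ w'} := by
    intro s hs
    simp only [mem_inter, mem_shadow_iff, mem_singleton, exists_eq_left] at hs
    obtain ⟨⟨j, hj, rfl⟩, ⟨j', hj', hs⟩⟩ := hs
    refine mem_singleton.2 (eq_of_subset_of_card_le
      (subset_inter (erase_subset j w) (hs ▸ erase_subset j' w')) ?_)
    rw [card_erase_of_mem hj, hW w hw]
    have := card_inter_lt (hW w hw) (hW w' hw') hne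
    omega
  have := card_union_add_card_inter (∂ {w}) (∂ {w'})
  have := card_le_card hsub
  have := card_le_card hinter
  rw [card_shadow_singleton, card_shadow_singleton, hW w hw, hW w' hw', card_singleton] at *
  omega

lemma le_card_shadow_insert (hV : ∀ w ∈ V, #w = l) (hu : u ∈ V) (huv : (graph l).Adj u v)
    (h : l + (l - 1) * (#(V.sup id) - l) ≤ #(∂ V)) :
    l + (l - 1) * (#((insert v V).sup id) - l) ≤ #(∂ (insert v V)) := by
  have hu_sup : u ⊆ V.sup id := le_sup (f := id) hu
  have hl_sup : l ≤ #(V.sup id) := hV u hu ▸ card_le_card hu_sup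
  by_cases hv : v ⊆ V.sup id
  · rw [sup_insert, id, sup_eq_right.2 hv]
    exact h.trans (card_le_card (shadow_mono (subset_insert v V)))
  obtain ⟨b, hbv, hbV⟩ := not_subset.1 hv
  have hvu : v ⊆ insert b (u ∩ v) := by
    have hbu : b ∉ u ∩ v := fun h => hbV (hu_sup (mem_inter.1 h).1)
    refine (eq_of_subset_of_card_le (insert_subset hbv inter_subset_right) ?_).symm.subset
    rw [card_insert_of_notMem hbu, huv.2.2.1, huv.2.1]
    omega
  have hsup : #((insert v V).sup id) ≤ #(V.sup id) + 1 := by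
    rw [sup_insert, id]
    refine (card_le_card (union_subset (hvu.trans (insert_subset_insert b ?_)) (subset_insert b _)))
      |>.trans (card_insert_le b _)
    exact inter_subset_left.trans hu_sup
  have hnew : Disjoint ((v.erase b).image v.erase) (∂ V) := by
    refine disjoint_left.2 fun s hs hsV => hbV ?_
    obtain ⟨j, hj, rfl⟩ := mem_image.1 hs
    obtain ⟨w, hw, a, -, hwa⟩ := mem_shadow_iff.1 hsV
    exact le_sup (f := id) hw
      (erase_subset a w (hwa ▸ mem_erase.2 ⟨(ne_of_mem_erase hj).symm, hbv⟩))
  have hnew_sub : (v.erase b).image v.erase ∪ ∂ V ⊆ ∂ (insert v V) := by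
    rw [show ∂ (insert v V) = v.image v.erase ∪ ∂ V from sup_insert]
    exact union_subset_union (image_subset_image (erase_subset b v)) subset_rfl
  have := card_le_card hnew_sub
  rw [card_union_of_disjoint hnew, card_image_of_injOn ((erase_injOn v).mono (erase_subset b v)),
    card_erase_of_mem hbv, huv.2.1] at this
  have : (l - 1) * (#((insert v V).sup id) - l) ≤ (l - 1) * (#(V.sup id) - l) + (l - 1) := by
    rw [← Nat.mul_succ]
    exact Nat.mul_le_mul_left _ (by omega)
  omega

theorem le_card_shadow_of_connected (hW : ∀ w ∈ W, #w = l)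
    (hconn : ((graph l).induce (W : Set (Finset α))).Connected) :
    l + (l - 1) * (#(W.sup id) - l) ≤ #(∂ W) := by
  obtain ⟨⟨w₀, hw₀⟩⟩ := hconn.nonempty
  have hW₀ : 0 < #W := card_pos.2 ⟨w₀, hw₀⟩
  have grow (m : ℕ) (hm : m < #W) :
      ∃ V ⊆ W, #V = m + 1 ∧ l + (l - 1) * (#(V.sup id) - l) ≤ #(∂ V) := by
    induction m with
    | zero =>
      refine ⟨{w₀}, singleton_subset_iff.2 hw₀, card_singleton _, ?_⟩
      simp [card_shadow_singleton, hW w₀ hw₀]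
    | succ m ih =>
      obtain ⟨V, hVW, hV, hbound⟩ := ih (by omega)
      obtain ⟨u, hu, v, hvW, hvV, huv⟩ := hconn.exists_adj_of_induce hVW (card_pos.1 (by omega))
        fun h => by have := card_le_card h; omega
      exact ⟨insert v V, insert_subset hvW hVW, by rw [card_insert_of_notMem hvV, hV],
        le_card_shadow_insert (fun w hw => hW w (hVW hw)) hu huv hbound⟩
  obtain ⟨V, hVW, hV, hbound⟩ := grow (#W - 1) (by omega)
  rwa [eq_of_subset_of_card_le hVW (by omega)] at hbound

/-- In the application `W` is a component of `J(n, k) - S` avoiding `r`, and these are elements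
of `S` that avoid `r` and are not neighbours of `x`. -/
def farBoundary (U : Finset α) (l : ℕ) (x : Finset α) (W : Finset (Finset α)) :
    Finset (Finset α) :=
  {v ∈ U.powersetCard l | v ∉ W ∧ (∃ w ∈ W, (graph l).Adj w v) ∧ #(v ∩ x) + 2 ≤ l}

lemma card_inter_swap_le (e j : α) (w x : Finset α) :
    #(insert e (w.erase j) ∩ x) ≤ #(w ∩ x) + 1 := by
  refine (card_le_card fun a ha => ?_).trans (card_insert_le e (w ∩ x))
  simp only [mem_inter, mem_insert, mem_erase] at ha ⊢
  tauto

lemma card_inter_swap_le_of (h : e ∉ x ∨ j ∈ w ∩ x) :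
    #(insert e (w.erase j) ∩ x) ≤ #(w ∩ x) := by
  rcases h with hex | hj
  · refine card_le_card fun a ha => ?_
    simp only [mem_inter, mem_insert, mem_erase] at ha ⊢
    rcases ha with ⟨rfl | ⟨-, ha⟩, hax⟩
    · exact absurd hax hex
    · exact ⟨ha, hax⟩
  · have hsub : insert e (w.erase j) ∩ x ⊆ insert e ((w ∩ x).erase j) := fun a ha => by
      simp only [mem_inter, mem_insert, mem_erase] at ha ⊢
      tauto
    have := (card_le_card hsub).trans (card_insert_le e _)
    rw [card_erase_of_mem hj] at this
    have := card_pos.2 ⟨j, hj⟩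
    omega

lemma swaps_subset_farBoundary (hWU : W ⊆ U.powersetCard l) (hw : w ∈ W) (hJ : J ⊆ w)
    (heU : e ∈ U) (heW : e ∉ W.sup id)
    (hx : ∀ j ∈ J, #(insert e (w.erase j) ∩ x) + 2 ≤ l) :
    swaps w J {e} ⊆ farBoundary U l x W := by
  intro v hv
  obtain ⟨j, hj, c, hc, rfl⟩ := mem_swaps.1 hv
  rw [mem_singleton.1 hc]
  have hew : e ∉ w := fun h => heW (le_sup (f := id) hw h)
  obtain ⟨hwU, hwl⟩ := mem_powersetCard.1 (hWU hw)
  refine mem_filter.2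
    ⟨mem_powersetCard.2 ⟨insert_subset heU ((erase_subset j w).trans hwU), ?_⟩,
    fun h => heW (le_sup (f := id) h (mem_insert_self e _)),
    ⟨w, hw, graph_adj_swap hwl (hJ hj) hew⟩, hx j hj⟩
  rw [card_insert_erase (hJ hj) hew, hwl]

lemma farBoundary_erase_subset :
    farBoundary (U.erase e) l (x.erase e) W ⊆ farBoundary U l x W := by
  intro v hv
  simp only [farBoundary, mem_filter, mem_powersetCard] at hv ⊢
  obtain ⟨⟨hvU, hvl⟩, hvW, hadj, hvx⟩ := hv
  have hev : e ∉ v := fun h => notMem_erase e U (hvU h)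
  rw [inter_erase, erase_eq_of_notMem fun h => hev (mem_inter.1 h).1] at hvx
  exact ⟨⟨hvU.trans (erase_subset e U), hvl⟩, hvW, hadj, hvx⟩

lemma mem_of_mem_swaps_singleton (hv : v ∈ swaps w J {e}) : e ∈ v := by
  obtain ⟨j, -, c, hc, rfl⟩ := mem_swaps.1 hv
  exact mem_singleton.1 hc ▸ mem_insert_self c _

lemma card_swaps_singleton (hJ : J ⊆ w) (he : e ∉ w) : #(swaps w J {e}) = #J := by
  rw [card_swaps hJ (disjoint_singleton_right.2 he), card_singleton, mul_one]

lemma swaps_inter_subset_farBoundary (hWU : W ⊆ U.powersetCard l) (hw : w ∈ W) (heU : e ∈ U)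
    (heW : e ∉ W.sup id) (hwx : #(w ∩ x) + 2 ≤ l) :
    swaps w (w ∩ x) {e} ⊆ farBoundary U l x W :=
  swaps_subset_farBoundary hWU hw inter_subset_left heU heW fun _ hj =>
    (Nat.add_le_add_right (card_inter_swap_le_of (Or.inr hj)) 2).trans hwx

lemma disjoint_swaps_inter (hex : e ∈ x) (h : w \ x ≠ w' \ x) :
    Disjoint (swaps w (w ∩ x) {e}) (swaps w' (w' ∩ x) {e}) := by
  have hdiff (w) : ∀ v ∈ swaps w (w ∩ x) {e}, v \ x = w \ x := fun v hv => by
    obtain ⟨j, hj, c, hc, rfl⟩ := mem_swaps.1 hv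
    rw [mem_singleton.1 hc]
    have hjx : j ∈ x := (mem_inter.1 hj).2
    ext a
    simp only [mem_sdiff, mem_insert, mem_erase]
    grind
  exact disjoint_left.2 fun v hv hv' => h ((hdiff w v hv).symm.trans (hdiff w' v hv'))

lemma le_card_farBoundary_of_erase (heU : e ∈ U) (hF : F ⊆ farBoundary U l x W)
    (hFe : ∀ v ∈ F, e ∈ v) (hFl : l - 1 ≤ #F)
    (h : (l - 1) * (#(U.erase e) + 1 - l) ≤
      #(∂ W) + #(farBoundary (U.erase e) l (x.erase e) W)) :
    (l - 1) * (#U + 1 - l) ≤ #(∂ W) + #(farBoundary U l x W) := by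
  have hdisj : Disjoint (farBoundary (U.erase e) l (x.erase e) W) F := by
    refine disjoint_left.2 fun v hv hvF => ?_
    simp only [farBoundary, mem_filter, mem_powersetCard] at hv
    exact notMem_erase e U (hv.1.1 (hFe v hvF))
  have := card_le_card (union_subset (farBoundary_erase_subset (e := e)) hF)
  rw [card_union_of_disjoint hdisj] at this
  rw [card_erase_of_mem heU] at h
  have hU := card_pos.2 ⟨e, heU⟩
  have : (l - 1) * (#U + 1 - l) ≤ (l - 1) * (#U - 1 + 1 - l) + (l - 1) := by
    rw [← Nat.mul_succ]
    exact Nat.mul_le_mul_left _ (by omega)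
  omega

lemma le_card_farBoundary_of_card_le (hU : #U ≤ l + 2) (hWl : ∀ w ∈ W, #w = l) (hW : 1 < #W)
    (hF : F ⊆ farBoundary U l x W) (hFl : l - 2 ≤ #F) :
    (l - 1) * (#U + 1 - l) ≤ #(∂ W) + #(farBoundary U l x W) := by
  have := two_mul_sub_one_le_card_shadow hWl hW
  have := card_le_card hF
  have : (l - 1) * (#U + 1 - l) ≤ (l - 1) * 3 := Nat.mul_le_mul_left _ (by omega)
  omega

lemma card_le_of_forall_sdiff_eq (hU : U ⊆ x ∪ W.sup id) (h : ∀ w ∈ W, w \ x = w' \ x) :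
    #U ≤ #x + #(w' \ x) := by
  refine (card_le_card fun z hz => ?_).trans (card_union_le x (w' \ x))
  by_cases hzx : z ∈ x
  · exact mem_union_left _ hzx
  obtain ⟨w, hw, hzw⟩ := mem_sup.1 ((mem_union.1 (hU hz)).resolve_left hzx)
  exact mem_union_right _ (h w hw ▸ mem_sdiff.2 ⟨hzw, hzx⟩)

lemma le_card_farBoundary_of_subset_sup (hWU : W ⊆ U.powersetCard l) (hU : U ⊆ W.sup id)
    (hconn : ((graph l).induce (W : Set (Finset α))).Connected) :
    (l - 1) * (#U + 1 - l) ≤ #(∂ W) + #(farBoundary U l x W) := by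
  have hWl (w) (hw : w ∈ W) : #w = l := (mem_powersetCard.1 (hWU hw)).2
  have hgrowth := le_card_shadow_of_connected hWl hconn
  rw [subset_antisymm (Finset.sup_le (f := id) fun w hw => (mem_powersetCard.1 (hWU hw)).1) hU]
    at hgrowth
  obtain ⟨⟨w₀, hw₀⟩⟩ := hconn.nonempty
  have : l ≤ #U := hWl w₀ hw₀ ▸ card_le_card (mem_powersetCard.1 (hWU hw₀)).1
  rw [show #U + 1 - l = #U - l + 1 by omega, Nat.mul_succ]
  omega

lemma exists_mem_not_mem_sup (h : ¬ U ⊆ W.sup id) :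
    ∃ e ∈ U, e ∉ W.sup id ∧ (e ∉ x ∨ U ⊆ x ∪ W.sup id) := by
  by_cases hout : ∃ e ∈ U, e ∉ W.sup id ∧ e ∉ x
  · obtain ⟨e, heU, heW, hex⟩ := hout
    exact ⟨e, heU, heW, Or.inl hex⟩
  obtain ⟨e, heU, heW⟩ := not_subset.1 h
  refine ⟨e, heU, heW, Or.inr fun z hz => ?_⟩
  by_contra h
  simp only [mem_union, not_or] at h
  exact hout ⟨z, hz, h.2, h.1⟩

/-- Induction on `U`, removing a point `e ∉ ⋃ W`: swaps of members of `W` towards `e` supply the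
missing `l - 1` boundary sets, unless all members of `W` are `D ∪ y` with `y ⊆ x` for one
two-set `D`; then `#U ≤ l + 2` and the shadow of two members nearly suffices on its own. -/
theorem le_card_shadow_add_card_farBoundary (hl : 3 ≤ l) (hxU : x ⊆ U) (hx : #x ≤ l)
    (hWU : W ⊆ U.powersetCard l) (hWx : ∀ w ∈ W, #(w ∩ x) + 2 ≤ l) (hW : 1 < #W)
    (hconn : ((graph l).induce (W : Set (Finset α))).Connected) :
    (l - 1) * (#U + 1 - l) ≤ #(∂ W) + #(farBoundary U l x W) := by
  induction U using Finset.strongInduction generalizing x with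
  | H U ih =>
  have hWl (w) (hw : w ∈ W) : #w = l := (mem_powersetCard.1 (hWU hw)).2
  obtain ⟨w₀, hw₀⟩ : W.Nonempty := card_pos.1 (by omega)
  by_cases hsup : U ⊆ W.sup id
  · exact le_card_farBoundary_of_subset_sup hWU hsup hconn
  obtain ⟨e, heU, heW, hex⟩ := exists_mem_not_mem_sup (x := x) hsup
  have hew (w) (hw : w ∈ W) : e ∉ w := fun h => heW (le_sup (f := id) hw h)
  have step (F) (hF : F ⊆ farBoundary U l x W) (hFe : ∀ v ∈ F, e ∈ v) (hFl : l - 1 ≤ #F) :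
      (l - 1) * (#U + 1 - l) ≤ #(∂ W) + #(farBoundary U l x W) := by
    refine le_card_farBoundary_of_erase heU hF hFe hFl (ih _ (erase_ssubset heU)
      (erase_subset_erase e hxU) ((card_le_card (erase_subset e x)).trans hx)
      (fun w hw => mem_powersetCard.2 ⟨?_, hWl w hw⟩)
      fun w hw => le_trans (by grw [erase_subset e x]) (hWx w hw))
    exact subset_erase.2 ⟨(mem_powersetCard.1 (hWU hw)).1, hew w hw⟩
  have step_swaps (w) (hw : w ∈ W) (hx' : ∀ j ∈ w, #(insert e (w.erase j) ∩ x) + 2 ≤ l) :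
      (l - 1) * (#U + 1 - l) ≤ #(∂ W) + #(farBoundary U l x W) :=
    step _ (swaps_subset_farBoundary hWU hw subset_rfl heU heW hx')
      (fun _ => mem_of_mem_swaps_singleton)
      (by rw [card_swaps_singleton subset_rfl (hew w hw), hWl w hw]; omega)
  rcases hex with hex | hUx
  · exact step_swaps w₀ hw₀ fun j _ =>
      (Nat.add_le_add_right (card_inter_swap_le_of (Or.inl hex)) 2).trans (hWx w₀ hw₀)
  by_cases hsmall : ∃ w ∈ W, #(w ∩ x) + 3 ≤ l
  · obtain ⟨w, hw, hwx⟩ := hsmall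
    exact step_swaps w hw fun j _ => by have := card_inter_swap_le e j w x; omega
  push Not at hsmall
  have hcard (w) (hw : w ∈ W) : #(swaps w (w ∩ x) {e}) = l - 2 := by
    rw [card_swaps_singleton inter_subset_left (hew w hw)]
    have := hsmall w hw
    have := hWx w hw
    omega
  have hfar (w) (hw : w ∈ W) : swaps w (w ∩ x) {e} ⊆ farBoundary U l x W :=
    swaps_inter_subset_farBoundary hWU hw heU heW (hWx w hw)
  by_cases hsame : ∀ w ∈ W, w \ x = w₀ \ x
  · refine le_card_farBoundary_of_card_le ?_ hWl hW (hfar w₀ hw₀) (hcard w₀ hw₀).ge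
    have := card_le_of_forall_sdiff_eq hUx hsame
    have := card_sdiff_add_card_inter w₀ x
    have := hsmall w₀ hw₀
    rw [hWl w₀ hw₀] at *
    omega
  push Not at hsame
  obtain ⟨w₁, hw₁, hne⟩ := hsame
  have hdisj := disjoint_swaps_inter ((mem_union.1 (hUx heU)).resolve_right heW) hne
  refine step _ (union_subset (hfar w₁ hw₁) (hfar w₀ hw₀)) (fun v hv => ?_) ?_
  · rcases mem_union.1 hv with hv | hv <;> exact mem_of_mem_swaps_singleton hv
  · rw [card_union_of_disjoint hdisj, hcard w₀ hw₀, hcard w₁ hw₁]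
    omega

lemma minus_le : minus U k T ≤ graph k := fun _ _ h => h.1

lemma card_inter_add_two_le (hs : s ∈ U.powersetCard k \ T) (ht : t ∈ U.powersetCard k \ T)
    (h : ¬ (minus U k T).Reachable s t) : #(s ∩ t) + 2 ≤ k := by
  simp only [mem_sdiff, mem_powersetCard] at hs ht
  have hst : s ≠ t := by rintro rfl; exact h .rfl
  have := card_inter_lt hs.1.2 ht.1.2 hst
  have : #(s ∩ t) ≠ k - 1 := fun h' =>
    h (Adj.reachable ⟨⟨hs.1.2, ht.1.2, h', hst⟩, hs.1.1, ht.1.1, hs.2, ht.2⟩)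
  omega

lemma mem_of_reachable_of_adj (hs : s ∈ U.powersetCard k \ T) (hst : (minus U k T).Reachable s t)
    (htu : (graph k).Adj t u) (huU : u ⊆ U) (hsu : ¬ (minus U k T).Reachable s u) : u ∈ T := by
  by_contra huT
  have := mem_of_reachable hst hs
  simp only [mem_sdiff, mem_powersetCard] at this
  exact hsu (hst.trans (Adj.reachable ⟨htu, this.1.1, huU, this.2, huT⟩))

lemma mul_le_card_memberSubfamily (hy : y ∈ U.powersetCard k \ T)
    (hz : z ∈ U.powersetCard k \ T)
    (hry : r ∈ y) (hrz : r ∈ z) (hyz : ¬ (minus U k T).Reachable y z) :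
    (k - 1) * (#U - k) ≤ #(T.memberSubfamily r) := by
  obtain ⟨⟨hyU, hyk⟩, -⟩ := mem_sdiff.1 hy |>.imp_left mem_powersetCard.1
  have hrU : r ∈ U := hyU hry
  obtain ⟨m, rfl⟩ : ∃ m, k = m + 1 := ⟨k - 1, by have := card_pos.2 ⟨r, hry⟩; omega⟩
  have := mul_le_card_of_not_reachable (erase_mem_link hy hry) (erase_mem_link hz hrz)
    (not_reachable_link hrU hry hrz hyz)
  rwa [card_erase_of_mem hrU, Nat.sub_sub, Nat.add_comm 1 m] at this

lemma le_card_of_component_avoiding (hk : 3 ≤ k) (hrU : r ∈ U) (hx : x ∈ U.powersetCard k \ T)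
    (hrx : r ∉ x) (hw : w ∈ U.powersetCard k \ T) (hxw : ¬ (minus U k T).Reachable x w)
    (hwr : ∀ z, (minus U k T).Reachable w z → r ∉ z) (hw' : ∃ t, (minus U k T).Adj w t) :
    (k - 1) * (#U - k) ≤
      #(T.memberSubfamily r) + #(T.nonMemberSubfamily r \ swaps x x ((U \ x).erase r)) := by
  classical
  obtain ⟨⟨hxU, hxk⟩, -⟩ := mem_sdiff.1 hx |>.imp_left mem_powersetCard.1
  set W := {v ∈ U.powersetCard k | (minus U k T).Reachable w v}
  have hW (v) : v ∈ W ↔ (minus U k T).Reachable w v :=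
    ⟨fun h => (mem_filter.1 h).2,
      fun h => mem_filter.2 ⟨(mem_sdiff.1 (mem_of_reachable h hw)).1, h⟩⟩
  have hWU : W ⊆ (U.erase r).powersetCard k := fun v hv => by
    obtain ⟨⟨hvU, hvk⟩, -⟩ := mem_sdiff.1 (mem_of_reachable ((hW v).1 hv) hw) |>.imp_left
      mem_powersetCard.1
    exact mem_powersetCard.2 ⟨subset_erase.2 ⟨hvU, hwr v ((hW v).1 hv)⟩, hvk⟩
  obtain ⟨t, hwt⟩ := hw'
  have hB := le_card_shadow_add_card_farBoundary hk (subset_erase.2 ⟨hxU, hrx⟩) hxk.le hWU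
    (fun v hv => card_inter_add_two_le (mem_of_reachable ((hW v).1 hv) hw) hx
      fun hvx => hxw (((hW v).1 hv).trans hvx).symm)
    (one_lt_card.2 ⟨w, (hW w).2 .rfl, t, (hW t).2 hwt.reachable, hwt.ne⟩)
    (connected_induce_of_forall_reachable hW minus_le)
  have hshadow : ∂ W ⊆ T.memberSubfamily r := fun s hs => by
    obtain ⟨v, hv, j, hj, rfl⟩ := mem_shadow_iff.1 hs
    obtain ⟨hvU, hvk⟩ := mem_powersetCard.1 (hWU hv)
    have hrv : r ∉ v := fun h => notMem_erase r U (hvU h)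
    refine mem_memberSubfamily.2 ⟨mem_of_reachable_of_adj hw ((hW v).1 hv)
      (graph_adj_swap hvk hj hrv) (insert_subset hrU ((erase_subset j v).trans
        (hvU.trans (erase_subset r U)))) fun hwu => hwr _ hwu (mem_insert_self r _),
      fun h => hrv (mem_of_mem_erase h)⟩
  have hfar : farBoundary (U.erase r) k x W ⊆
      T.nonMemberSubfamily r \ swaps x x ((U \ x).erase r) := fun v hv => by
    simp only [farBoundary, mem_filter, mem_powersetCard] at hv
    obtain ⟨⟨hvU, hvk⟩, hvW, ⟨u, hu, huv⟩, hvx⟩ := hv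
    refine mem_sdiff.2 ⟨mem_nonMemberSubfamily.2 ⟨mem_of_reachable_of_adj hw ((hW u).1 hu) huv
      (hvU.trans (erase_subset r U)) fun h => hvW ((hW v).2 h),
      fun h => notMem_erase r U (hvU h)⟩, fun hvX => ?_⟩
    obtain ⟨i, hi, c, hc, rfl⟩ := mem_swaps.1 hvX
    rw [inter_comm, inter_insert_erase (mem_sdiff.1 (mem_of_mem_erase hc)).2,
      card_erase_of_mem hi] at hvx
    omega
  have := card_le_card hshadow
  have := card_le_card hfar
  have : (k - 1) * (#U - k) ≤ (k - 1) * (#(U.erase r) + 1 - k) :=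
    Nat.mul_le_mul_left _ (by rw [card_erase_of_mem hrU]; omega)
  omega

lemma two_mul_sub_one_mul_sub_le (k m : ℕ) :
    (2 * k - 1) * m - k ≤ (k - 1) * m + k * (m - 1) := by
  rcases m with _ | m
  · simp
  rcases k with _ | k
  · simp
  rw [show 2 * (k + 1) - 1 = 2 * k + 1 by omega, Nat.add_sub_cancel, Nat.add_sub_cancel]
  apply Nat.sub_le_of_le_add
  ring_nf
  omega

theorem le_card_of_forall_adj_mem (hk : 3 ≤ k) (hrU : r ∈ U) (hx : x ∈ U.powersetCard k \ T)
    (hrx : r ∉ x) (hnb : ∀ t, (minus U k T).Adj x t → r ∈ t)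
    (hcut : ∃ w ∈ U.powersetCard k \ T, ¬ (minus U k T).Reachable x w)
    (hiso : ∀ s ∈ U.powersetCard k \ T, ∃ t, (minus U k T).Adj s t) :
    (2 * k - 1) * (#U - k) - k ≤ #T := by
  obtain ⟨w, hw, hxw⟩ := hcut
  obtain ⟨y, hxy⟩ := hiso x hx
  have hy := mem_of_reachable hxy.reachable hx
  have hxU : x ⊆ U := (mem_powersetCard.1 (mem_sdiff.1 hx).1).1
  have hxk : #x = k := (mem_powersetCard.1 (mem_sdiff.1 hx).1).2
  set X := swaps x x ((U \ x).erase r)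
  have hrX (t) (ht : t ∈ X) : r ∉ t := by
    obtain ⟨i, -, c, hc, rfl⟩ := mem_swaps.1 ht
    simp only [mem_insert, mem_erase, not_or]
    exact ⟨fun h => (ne_of_mem_erase hc) h.symm, fun h => hrx h.2⟩
  have hX : X ⊆ T.nonMemberSubfamily r := fun t ht => mem_nonMemberSubfamily.2
    ⟨swaps_subset hx subset_rfl (erase_subset r _) (fun t ht hxt => hrX t ht (hnb t hxt)) ht,
      hrX t ht⟩
  have hXcard : #X = k * (#U - k - 1) := by
    rw [card_swaps subset_rfl (disjoint_of_subset_right (erase_subset r _) disjoint_sdiff),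
      card_erase_of_mem (mem_sdiff.2 ⟨hrU, hrx⟩), card_sdiff_of_subset hxU, hxk]
  have key : (k - 1) * (#U - k) ≤ #(T.memberSubfamily r) + #(T.nonMemberSubfamily r \ X) := by
    by_cases hI : ∃ z ∈ U.powersetCard k \ T, r ∈ z ∧ ¬ (minus U k T).Reachable y z
    · obtain ⟨z, hz, hrz, hyz⟩ := hI
      exact (mul_le_card_memberSubfamily hy hz (hnb y hxy) hrz hyz).trans (Nat.le_add_right _ _)
    push Not at hI
    exact le_card_of_component_avoiding hk hrU hx hrx hw hxw (fun z hwz hrz => hxw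
      (hxy.reachable.trans ((hI z (mem_of_reachable hwz hw) hrz).trans hwz.symm))) (hiso w hw)
  have := card_memberSubfamily_add_card_nonMemberSubfamily r T
  have := card_sdiff_add_card_eq_card hX
  have := two_mul_sub_one_mul_sub_le k (#U - k)
  omega

end Johnson

section Transfer

variable {n k : ℕ} {S : Finset (JV n k)}

lemma johnsonGraph_adj_iff_s5 {u v : JV n k} :
    (johnsonGraph n k).Adj u v ↔ (Johnson.graph k).Adj u.1 v.1 :=
  ⟨fun h => ⟨u.2, v.2, h.2, fun e => h.1 (Subtype.ext e)⟩,
    fun h => ⟨fun e => h.2.2.2 (congrArg Subtype.val e), h.2.2.1⟩⟩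

def deletedSets (S : Finset (JV n k)) : Finset (Finset (Fin n)) :=
  S.map (Function.Embedding.subtype _)

lemma val_mem_deletedSets {v : JV n k} : v.1 ∈ deletedSets S ↔ v ∈ S :=
  mem_map' (Function.Embedding.subtype _)

lemma reachable_induce_of_reachable_minus {u v : JV n k} (hu : u ∉ S) (hv : v ∉ S)
    (h : (Johnson.minus univ k (deletedSets S)).Reachable u.1 v.1) :
    ((johnsonGraph n k).induce (S : Set (JV n k))ᶜ).Reachable ⟨u, hu⟩ ⟨v, hv⟩ := by
  suffices ∀ s, Relation.ReflTransGen (Johnson.minus univ k (deletedSets S)).Adj s v.1 →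
      ∀ (hs : #s = k) (hsS : (⟨s, hs⟩ : JV n k) ∉ S),
        ((johnsonGraph n k).induce (S : Set (JV n k))ᶜ).Reachable
          ⟨⟨s, hs⟩, hsS⟩ ⟨v, hv⟩ from
    this u.1 ((reachable_iff_reflTransGen _ _).1 h) u.2 hu
  intro s hsv
  induction hsv using Relation.ReflTransGen.head_induction_on with
  | refl => exact fun _ _ => .rfl
  | head hadj _ ih =>
    intro hs hsS
    have hS' : ⟨_, hadj.1.2.1⟩ ∉ S := fun h => hadj.2.2.2.2 (val_mem_deletedSets.2 h)
    have hadj' : ((johnsonGraph n k).induce (S : Set (JV n k))ᶜ).Adj ⟨⟨_, hs⟩, hsS⟩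
        ⟨⟨_, hadj.1.2.1⟩, hS'⟩ := johnsonGraph_adj_iff_s5.2 hadj.1
    exact hadj'.reachable.trans (ih hadj.1.2.1 hS')

end Transfer

theorem card_ge_of_all_neighbors_contain_general (n k : ℕ) (hk : 3 ≤ k)
    (S : Finset (JV n k)) (hS : IsMinSuperVertexCut (johnsonGraph n k) S)
    (r : Fin n) (x : JV n k) (hx : x ∉ S) (hrx : r ∉ x.val)
    (hnb : ∀ y : JV n k, y ∉ S → (johnsonGraph n k).Adj x y → r ∈ y.val) :
    (2 * k - 1) * (n - k) - k ≤ S.card := by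
  set T := deletedSets S
  have hvert {v : JV n k} (hv : v ∉ S) : v.1 ∈ univ.powersetCard k \ T :=
    mem_sdiff.2
      ⟨mem_powersetCard.2 ⟨subset_univ _, v.2⟩, fun h => hv (val_mem_deletedSets.1 h)⟩
  have hcut : ∃ w ∈ univ.powersetCard k \ T, ¬ (Johnson.minus univ k T).Reachable x.1 w := by
    obtain ⟨w, hxw⟩ :
        ∃ w, ¬ ((johnsonGraph n k).induce (S : Set (JV n k))ᶜ).Reachable ⟨x, hx⟩ w := by
      by_contra! h
      exact hS.1.1 fun u v => (h u).symm.trans (h v)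
    exact ⟨w.1.1, hvert w.2, fun h => hxw (reachable_induce_of_reachable_minus hx w.2 h)⟩
  have := Johnson.le_card_of_forall_adj_mem hk (mem_univ r) (hvert hx) hrx (fun t hxt => ?_) hcut
    fun s hs => ?_
  · rwa [card_univ, Fintype.card_fin, show #T = #S from card_map _] at this
  · exact hnb ⟨t, hxt.1.2.1⟩ (fun h => hxt.2.2.2.2 (val_mem_deletedSets.2 h))
      (johnsonGraph_adj_iff_s5.2 hxt.1)
  · simp only [mem_sdiff, mem_powersetCard] at hs
    have hsS : (⟨s, hs.1.2⟩ : JV n k) ∉ S := fun h => hs.2 (val_mem_deletedSets.2 h)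
    obtain ⟨t, hst⟩ := hS.1.2 ⟨_, hsS⟩
    exact ⟨t.1.1, johnsonGraph_adj_iff_s5.1 hst, subset_univ _, subset_univ _, hs.2,
      fun h => t.2 (val_mem_deletedSets.1 h)⟩

/-- If `S` is a minimum super vertex-cut of `J(n,k)` (`k ≥ 3`, `n ≥ k+3`) and
some vertex `x` of `G - S` not containing `r` has all its neighbours in `G - S`
containing `r`, then `|S| ≥ (2k-1)(n-k) - k`. -/
theorem card_ge_of_all_neighbors_contain (n k : ℕ) (hk : 3 ≤ k) (hn : k + 3 ≤ n)
    (S : Finset (JV n k)) (hS : IsMinSuperVertexCut (johnsonGraph n k) S)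
    (r : Fin n) (x : JV n k) (hx : x ∉ S) (hrx : r ∉ x.val)
    (hnb : ∀ y : JV n k, y ∉ S → (johnsonGraph n k).Adj x y → r ∈ y.val) :
    (2 * k - 1) * (n - k) - k ≤ S.card :=
  card_ge_of_all_neighbors_contain_general n k hk S hS r x hx hrx hnb
end

section
/- For every integer n ≥ 6, the super-connectivity of the Johnson graph J(n,3) equals 5n−18. -/
/-!
Lower bound. Let `S` be a super vertex-cut of `J(n,3)`, `F` a component of `J(n,3) - S`, and
colour a pair of points red when some triple of `F` contains it, blue otherwise. A triple outside
`S` containing a red pair is equal or adjacent to a triple of `F`, hence lies in `F` and is all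
red; so every two-coloured triple lies in `S`. The sum `∑ᵥ red(v) * blue(v)` counts the paths
`p v q` with `vp` red and `vq` blue, and a two-coloured triangle contains exactly two of them,
whence `2|S| ≥ ∑ᵥ red(v) * blue(v)`. An edge inside `F` gives a red diamond (`K₄` minus an edge),
an edge in another component a blue one, and for `n ≥ 6` any such colouring of `Kₙ` has
`∑ᵥ red(v) * blue(v) ≥ 10n - 36`.

Upper bound. The `5n - 18` neighbours of an edge `AB` separate it from the rest, and every triple
meeting both `A` and `B` in at most one point has a neighbour with the same property.
-/

open SimpleGraph Finset

namespace SimpleGraph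

variable {V : Type*}

def IsDiamond (G : SimpleGraph V) (a b x y : V) : Prop :=
  G.Adj a b ∧ G.Adj a x ∧ G.Adj a y ∧ G.Adj b x ∧ G.Adj b y ∧ x ≠ y

def IsBichromatic (R : SimpleGraph V) (T : Finset V) : Prop :=
  (∃ p ∈ T, ∃ q ∈ T, R.Adj p q) ∧ ∃ p ∈ T, ∃ q ∈ T, Rᶜ.Adj p q

lemma Reachable.mem_of_forall_adj_mem {G : SimpleGraph V} {U : Set V}
    (hU : ∀ x y, G.Adj x y → x ∈ U → y ∈ U) {u w : V} (h : G.Reachable u w) (hu : u ∈ U) :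
    w ∈ U := by
  obtain ⟨p⟩ := h
  induction p with
  | nil => exact hu
  | cons hadj _ ih => exact ih (hU _ _ hadj hu)

/-- The triples `(v, p, q)` with `vp ∈ R` and `vq ∉ R` spanning the triangle `vpq` are this one
and the one centred at the other end of the edge of minority colour. -/
lemma eq_or_eq_of_adj_of_adj_compl {R : SimpleGraph V} [DecidableRel R.Adj] {v p q v' p' q' : V}
    (hvp : R.Adj v p) (hvq : Rᶜ.Adj v q) (hvp' : R.Adj v' p') (hvq' : Rᶜ.Adj v' q')
    (hv' : v' = v ∨ v' = p ∨ v' = q) (hp' : p' = v ∨ p' = p ∨ p' = q)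
    (hq' : q' = v ∨ q' = p ∨ q' = q) :
    (⟨v', p', q'⟩ : Σ _ : V, V × V) = ⟨v, p, q⟩ ∨
      (⟨v', p', q'⟩ : Σ _ : V, V × V) = if R.Adj p q then ⟨q, p, v⟩ else ⟨p, v, q⟩ := by
  rw [compl_adj] at hvq hvq'
  have := hvp.ne
  rcases hv' with rfl | rfl | rfl <;> rcases hp' with rfl | rfl | rfl <;>
    rcases hq' with rfl | rfl | rfl <;> split_ifs <;> simp_all [R.adj_comm]

section Diamond

variable {G : SimpleGraph V} {a b x y : V}

lemma IsDiamond.swap (h : G.IsDiamond a b x y) : G.IsDiamond b a x y :=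
  ⟨h.1.symm, h.2.2.2.1, h.2.2.2.2.1, h.2.1, h.2.2.1, h.2.2.2.2.2⟩

variable [DecidableEq V]

lemma IsDiamond.sum_eq {M : Type*} [AddCommMonoid M] (h : G.IsDiamond a b x y) (f : V → M) :
    ∑ v ∈ {a, b, x, y}, f v = f a + f b + f x + f y := by
  obtain ⟨hab, hax, hay, hbx, hby, hxy⟩ := h
  rw [sum_insert (by simp [hab.ne, hax.ne, hay.ne]), sum_insert (by simp [hbx.ne, hby.ne]),
    sum_pair hxy, add_assoc, add_assoc]

lemma IsDiamond.card_eq (h : G.IsDiamond a b x y) : #{a, b, x, y} = 4 := by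
  rw [card_eq_sum_ones, h.sum_eq]

variable [Fintype V] [DecidableRel G.Adj]

lemma IsDiamond.three_le_degree (h : G.IsDiamond a b x y) : 3 ≤ G.degree a := by
  obtain ⟨hab, hax, hay, hbx, hby, hxy⟩ := h
  rw [← card_neighborFinset_eq_degree, ← card_eq_three.mpr ⟨b, x, y, hbx.ne, hby.ne, hxy, rfl⟩]
  exact card_le_card (by simp [insert_subset_iff, hab, hax, hay])

lemma IsDiamond.two_le_degree (h : G.IsDiamond a b x y) {v : V}
    (hv : v ∈ ({a, b, x, y} : Finset V)) : 2 ≤ G.degree v := by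
  obtain ⟨hab, hax, hay, hbx, hby, -⟩ := h
  have key : ∀ w p q, p ≠ q → G.Adj w p → G.Adj w q → 2 ≤ G.degree w := fun w p q hpq hp hq => by
    rw [← card_neighborFinset_eq_degree, ← card_pair hpq]
    exact card_le_card (by simp [insert_subset_iff, hp, hq])
  simp only [mem_insert, mem_singleton] at hv
  obtain rfl | rfl | rfl | rfl := hv
  · exact key _ _ _ hbx.ne hab hax
  · exact key _ _ _ hax.ne hab.symm hbx
  · exact key _ _ _ hab.ne hax.symm hbx.symm
  · exact key _ _ _ hab.ne hay.symm hby.symm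

end Diamond

section Colouring

variable [Fintype V] [DecidableEq V] (R : SimpleGraph V) [DecidableRel R.Adj]

lemma degree_add_degree_compl (v : V) : R.degree v + Rᶜ.degree v + 1 = Fintype.card V := by
  have := R.degree_lt_card_verts v
  rw [degree_compl]
  omega

variable {R} {a b x y a' b' x' y' : V}

lemma mul_le_degree_mul_degree_compl {v : V} {p : ℕ} (h : p ≤ R.degree v)
    (h' : p ≤ Rᶜ.degree v) : p * (Fintype.card V - 1 - p) ≤ R.degree v * Rᶜ.degree v := by
  obtain ⟨s, hs⟩ := Nat.exists_eq_add_of_le h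
  obtain ⟨t, ht⟩ := Nat.exists_eq_add_of_le h'
  have : Fintype.card V - 1 - p = p + s + t := by
    have := R.degree_add_degree_compl v
    omega
  rw [this, hs, ht]
  nlinarith

lemma adj_of_degree_compl_eq_zero {u v : V} (hu : Rᶜ.degree u = 0) (huv : u ≠ v) : R.Adj u v := by
  by_contra h
  rw [← card_neighborFinset_eq_degree, card_eq_zero, eq_empty_iff_forall_notMem] at hu
  exact hu v (by simp [huv, h])

lemma le_sum_degree_mul_degree_compl (U P : Finset V)
    (hU : ∀ v ∉ U, 1 ≤ R.degree v ∧ 1 ≤ Rᶜ.degree v)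
    (hP : ∀ v ∈ P, 2 ≤ R.degree v ∧ 2 ≤ Rᶜ.degree v) :
    (Fintype.card V - #U) * (Fintype.card V - 2) + #P * (Fintype.card V - 4) ≤
      ∑ v, R.degree v * Rᶜ.degree v := by
  calc _ = ∑ v, ((if v ∈ U then 0 else Fintype.card V - 2) +
        if v ∈ P then Fintype.card V - 4 else 0) := by
        simp [sum_add_distrib, sum_ite, filter_notMem_eq_sdiff, card_sdiff]
    _ ≤ ∑ v, R.degree v * Rᶜ.degree v := by
        refine sum_le_sum fun v _ => show _ ≤ _ from ?_
        by_cases hvP : v ∈ P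
        · have hmul := mul_le_degree_mul_degree_compl (hP v hvP).1 (hP v hvP).2
          have hsum := R.degree_add_degree_compl v
          have hdeg := hP v hvP
          split_ifs <;> omega
        · by_cases hvU : v ∈ U
          · simp [hvP, hvU]
          · have := mul_le_degree_mul_degree_compl (hU v hvU).1 (hU v hvU).2
            simp only [hvU, hvP, if_false, add_zero]
            omega

lemma two_le_card_mixed_of_degree_compl_eq_zero (hR : R.IsDiamond a b x y)
    (hB : Rᶜ.IsDiamond a' b' x' y') {u : V} (hu : Rᶜ.degree u = 0) :
    2 ≤ #{v | 2 ≤ R.degree v ∧ 2 ≤ Rᶜ.degree v} := by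
  set P := ({v | 2 ≤ R.degree v ∧ 2 ≤ Rᶜ.degree v} : Finset V)
  set L := ({v ∈ {a', b', x', y'} | R.degree v ≤ 1} : Finset V)
  have hLP : {a', b', x', y'} \ L ⊆ P := fun v hv => by
    simp only [L, mem_sdiff, mem_filter, not_and, not_le] at hv
    simpa [P] using ⟨hv.2 hv.1, hB.two_le_degree hv.1⟩
  have hcard : #({a', b', x', y'} \ L) + #L = 4 := by
    rw [card_sdiff_add_card_eq_card (filter_subset _ _), hB.card_eq]
  by_cases hL : #L ≤ 2
  · exact (by omega : 2 ≤ #({a', b', x', y'} \ L)).trans (card_le_card hLP)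
  -- the vertices of `L` have `u` as their only red neighbour, so they are blue to the red diamond
  have hQP : ({a, b, x, y} : Finset V).erase u ⊆ P := fun w hw => by
    obtain ⟨hwu, hwQ⟩ := mem_erase.mp hw
    have hwR := hR.two_le_degree hwQ
    have hLw : L ⊆ Rᶜ.neighborFinset w := fun l hl => by
      obtain ⟨hlQ, hlR⟩ := mem_filter.mp hl
      have hlu : l ≠ u := by
        rintro rfl
        have := hB.two_le_degree hlQ
        omega
      have hwl : w ≠ l := by
        rintro rfl
        omega
      rw [mem_neighborFinset, compl_adj]
      refine ⟨hwl, fun hadj => hwu ?_⟩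
      rw [← card_neighborFinset_eq_degree, card_le_one] at hlR
      exact hlR w (by simpa using hadj.symm) u
        (by simpa using (adj_of_degree_compl_eq_zero hu hlu.symm).symm)
    have := (card_le_card hLw).trans_eq (card_neighborFinset_eq_degree _ _)
    simp only [P, mem_filter, mem_univ, true_and]
    omega
  have := pred_card_le_card_erase (s := ({a, b, x, y} : Finset V)) (a := u)
  rw [hR.card_eq] at this
  exact (by omega : 2 ≤ #(({a, b, x, y} : Finset V).erase u)).trans (card_le_card hQP)

lemma ten_mul_le_sum_degree_mul_degree_compl_of_degree_ne_zero (hn : 6 ≤ Fintype.card V)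
    (hR : R.IsDiamond a b x y) (hB : Rᶜ.IsDiamond a' b' x' y') (hiso : ∀ v, R.degree v ≠ 0) :
    10 * Fintype.card V ≤ 36 + ∑ v, R.degree v * Rᶜ.degree v := by
  set U := ({v | Rᶜ.degree v = 0} : Finset V)
  have hUR : ∀ v ∉ U, #U ≤ R.degree v := fun v hv => by
    rw [← card_neighborFinset_eq_degree]
    refine card_le_card fun u hu => ?_
    have huv : u ≠ v := by
      rintro rfl
      exact hv hu
    simpa using (adj_of_degree_compl_eq_zero (mem_filter.mp hu).2 huv).symm
  have hUB : ∀ v ∉ U, 1 ≤ Rᶜ.degree v := fun v hv => by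
    simp only [U, mem_filter, mem_univ, true_and] at hv
    omega
  have hBU : ∀ v ∈ ({a', b', x', y'} : Finset V), v ∉ U := fun v hv hvU => by
    have := hB.two_le_degree hv
    simp only [U, mem_filter] at hvU
    omega
  rcases le_or_gt 3 #U with hU3 | hU3
  · -- the blue diamond alone carries `6(n - 4) + 4(n - 3) = 10n - 36`
    have hdeg : ∀ v ∈ ({a', b', x', y'} : Finset V), 3 ≤ R.degree v := fun v hv =>
      hU3.trans (hUR v (hBU v hv))
    have ha := mul_le_degree_mul_degree_compl (hdeg a' (by simp)) hB.three_le_degree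
    have hb := mul_le_degree_mul_degree_compl (hdeg b' (by simp)) hB.swap.three_le_degree
    have hx := mul_le_degree_mul_degree_compl (le_of_add_le_right (hdeg x' (by simp)))
      (hB.two_le_degree (by simp))
    have hy := mul_le_degree_mul_degree_compl (le_of_add_le_right (hdeg y' (by simp)))
      (hB.two_le_degree (by simp))
    have hsum := sum_le_sum_of_subset (f := fun v => R.degree v * Rᶜ.degree v)
      (subset_univ ({a', b', x', y'} : Finset V))
    rw [hB.sum_eq] at hsum
    omega
  · set P := ({v | 2 ≤ R.degree v ∧ 2 ≤ Rᶜ.degree v} : Finset V)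
    have hP : 2 * #U ≤ #P := by
      interval_cases h : #U
      · simp
      · obtain ⟨u, hu⟩ := card_pos.mp (by omega : 0 < #U)
        exact two_le_card_mixed_of_degree_compl_eq_zero hR hB (mem_filter.mp hu).2
      · refine hB.card_eq.symm.le.trans (card_le_card fun v hv => ?_)
        simpa [P, hB.two_le_degree hv] using hUR v (hBU v hv)
    have hsum := le_sum_degree_mul_degree_compl U P
      (fun v hv => ⟨Nat.one_le_iff_ne_zero.mpr (hiso v), hUB v hv⟩)
      (fun v hv => (mem_filter.mp hv).2)
    -- `(n - m)(n - 2) + 2m(n - 4) = (n - 6)² + 10n - 36 + m(n - 6)`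
    generalize #U = m at hU3 hP hsum
    generalize #P = p at hP hsum
    obtain ⟨k, hk⟩ := Nat.exists_eq_add_of_le' hn
    rw [hk] at hsum ⊢
    obtain ⟨j, hj⟩ : ∃ j, k + 6 - m = j := ⟨_, rfl⟩
    rw [hj, show k + 6 - 2 = k + 4 by omega, show k + 6 - 4 = k + 2 by omega] at hsum
    have : j + m = k + 6 := by omega
    nlinarith [Nat.mul_le_mul_right (k + 2) hP]

theorem ten_mul_le_sum_degree_mul_degree_compl (hn : 6 ≤ Fintype.card V)
    (hR : R.IsDiamond a b x y) (hB : Rᶜ.IsDiamond a' b' x' y') :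
    10 * Fintype.card V ≤ 36 + ∑ v, R.degree v * Rᶜ.degree v := by
  by_cases hiso : ∀ v, R.degree v ≠ 0
  · exact ten_mul_le_sum_degree_mul_degree_compl_of_degree_ne_zero hn hR hB hiso
  obtain ⟨u, hu⟩ := not_forall_not.mp hiso
  have hcc : ∀ v, Rᶜᶜ.degree v = R.degree v := fun v => by
    have := R.degree_lt_card_verts v
    rw [degree_compl, degree_compl]
    omega
  have hiso' : ∀ v, Rᶜ.degree v ≠ 0 := fun v => by
    by_cases hvu : v = u
    · subst hvu
      have := R.degree_add_degree_compl v
      omega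
    · have := adj_of_degree_compl_eq_zero ((hcc u).trans hu) (Ne.symm hvu)
      exact ((Rᶜ.degree_pos_iff_exists_adj v).mpr ⟨u, this.symm⟩).ne'
  have := ten_mul_le_sum_degree_mul_degree_compl_of_degree_ne_zero hn hB
    (by rwa [compl_compl]) hiso'
  simpa [hcc, mul_comm] using this

lemma sum_degree_mul_degree_compl_le_two_mul_card {𝒯 : Finset (Finset V)}
    (h𝒯 : ∀ T, #T = 3 → R.IsBichromatic T → T ∈ 𝒯) :
    ∑ v, R.degree v * Rᶜ.degree v ≤ 2 * #𝒯 := by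
  set C := (univ : Finset V).sigma fun v => R.neighborFinset v ×ˢ Rᶜ.neighborFinset v
  have hC : ∀ c, c ∈ C ↔ R.Adj c.1 c.2.1 ∧ Rᶜ.Adj c.1 c.2.2 := by simp [C]
  let vertices : (Σ _ : V, V × V) → Finset V := fun c => {c.1, c.2.1, c.2.2}
  have himage : C.image vertices ⊆ 𝒯 := by
    simp only [subset_iff, mem_image]
    rintro _ ⟨⟨v, p, q⟩, hc, rfl⟩
    obtain ⟨hp, hq⟩ := (hC _).mp hc
    have hpq : p ≠ q := by
      rintro rfl
      exact ((compl_adj _ _ _).mp hq).2 hp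
    exact h𝒯 _ (card_eq_three.mpr ⟨v, p, q, hp.ne, hq.ne, hpq, rfl⟩)
      ⟨⟨v, by simp [vertices], p, by simp [vertices], hp⟩,
        v, by simp [vertices], q, by simp [vertices], hq⟩
  have hfibre : ∀ T ∈ C.image vertices, #{c ∈ C | vertices c = T} ≤ 2 := by
    simp only [mem_image]
    rintro _ ⟨⟨v, p, q⟩, hc, rfl⟩
    obtain ⟨hp, hq⟩ := (hC _).mp hc
    refine (card_le_card fun c hc' => ?_).trans
      (card_insert_le ⟨v, p, q⟩ {if R.Adj p q then ⟨q, p, v⟩ else ⟨p, v, q⟩})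
    obtain ⟨v', p', q'⟩ := c
    obtain ⟨hc'C, hc'T⟩ := mem_filter.mp hc'
    obtain ⟨hp', hq'⟩ := (hC _).mp hc'C
    have hmem : ∀ w ∈ ({v', p', q'} : Finset V), w = v ∨ w = p ∨ w = q := fun w hw => by
      simpa [vertices, hc'T] using hw
    simpa using eq_or_eq_of_adj_of_adj_compl hp hq hp' hq' (hmem v' (by simp))
      (hmem p' (by simp)) (hmem q' (by simp))
  calc ∑ v, R.degree v * Rᶜ.degree v = #C := by
        simp [C, card_sigma, card_neighborFinset_eq_degree]
    _ ≤ 2 * #(C.image vertices) := card_le_mul_card_image C 2 hfibre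
    _ ≤ 2 * #𝒯 := by gcongr

end Colouring

section EdgeNeighborFinset

variable [Fintype V] [DecidableEq V] (G : SimpleGraph V) [DecidableRel G.Adj]

def edgeNeighborFinset (A B : V) : Finset V :=
  (G.neighborFinset A ∪ G.neighborFinset B) \ {A, B}

variable {G}

theorem isSuperVertexCut_edgeNeighborFinset {A B : V} (hAB : G.Adj A B)
    (hex : ∃ z, (z ≠ A ∧ ¬ G.Adj A z) ∧ (z ≠ B ∧ ¬ G.Adj B z))
    (hnbr : ∀ z, (z ≠ A ∧ ¬ G.Adj A z) → (z ≠ B ∧ ¬ G.Adj B z) →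
      ∃ z', G.Adj z z' ∧ (z' ≠ A ∧ ¬ G.Adj A z') ∧ (z' ≠ B ∧ ¬ G.Adj B z')) :
    IsSuperVertexCut G ↑(G.edgeNeighborFinset A B) := by
  have hmem : ∀ z, z ∉ G.edgeNeighborFinset A B ↔
      z = A ∨ z = B ∨ (z ≠ A ∧ ¬ G.Adj A z) ∧ (z ≠ B ∧ ¬ G.Adj B z) := fun z => by
    simp only [edgeNeighborFinset, mem_sdiff, mem_union, mem_neighborFinset, mem_insert,
      mem_singleton]
    tauto
  have hA : A ∈ (↑(G.edgeNeighborFinset A B) : Set V)ᶜ := (hmem A).mpr (.inl rfl)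
  have hB : B ∈ (↑(G.edgeNeighborFinset A B) : Set V)ᶜ := (hmem B).mpr (.inr (.inl rfl))
  refine ⟨fun hconn => ?_, fun ⟨v, hv⟩ => ?_⟩
  · obtain ⟨C, hC⟩ := hex
    have hU : ∀ x y : ↥(↑(G.edgeNeighborFinset A B) : Set V)ᶜ,
        (G.induce _).Adj x y → x.1 = A ∨ x.1 = B → y.1 = A ∨ y.1 = B := by
      rintro ⟨x, -⟩ ⟨y, hy⟩ (hxy : G.Adj x y) (hx : x = A ∨ x = B)
      have := (hmem y).mp hy
      show y = A ∨ y = B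
      rcases hx with rfl | rfl <;> tauto
    rcases (hconn ⟨A, hA⟩ ⟨C, (hmem C).mpr (.inr (.inr hC))⟩).mem_of_forall_adj_mem
      (U := {z | z.1 = A ∨ z.1 = B}) hU (.inl rfl) with h | h
    · exact hC.1.1 h
    · exact hC.2.1 h
  · rcases (hmem v).mp hv with rfl | rfl | hfar
    · exact ⟨⟨B, hB⟩, hAB⟩
    · exact ⟨⟨A, hA⟩, hAB.symm⟩
    · obtain ⟨z', hadj, hz'⟩ := hnbr v hfar.1 hfar.2
      exact ⟨⟨z', (hmem z').mpr (.inr (.inr hz'))⟩, hadj⟩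

end EdgeNeighborFinset

end SimpleGraph

def shadowGraph {n k : ℕ} (F : Set (JV n k)) : SimpleGraph (Fin n) where
  Adj p q := p ≠ q ∧ ∃ z ∈ F, p ∈ z.1 ∧ q ∈ z.1
  symm := ⟨fun _ _ ⟨h, z, hz, hp, hq⟩ => ⟨h.symm, z, hz, hq, hp⟩⟩
  loopless := ⟨fun _ h => h.1 rfl⟩

namespace Johnson

variable {n : ℕ}

lemma card_inter_lt_of_ne {k : ℕ} {u v : JV n k} (h : u ≠ v) : #(u.1 ∩ v.1) < k := by
  by_contra! hk
  have huv : u.1 ∩ v.1 = u.1 := eq_of_subset_of_card_le inter_subset_left (by rwa [u.2])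
  have huv' : u.1 ⊆ v.1 := huv ▸ inter_subset_right
  exact h (Subtype.ext (eq_of_subset_of_card_le huv' (by rw [u.2, v.2])))

lemma exists_mem_notMem_of_ne {k : ℕ} {u v : JV n k} (h : u ≠ v) : ∃ x ∈ u.1, x ∉ v.1 :=
  not_subset.mp fun huv => h (Subtype.ext (eq_of_subset_of_card_le huv (by rw [u.2, v.2])))

lemma exists_adj_insert_erase {k : ℕ} (z : JV n k) {x y : Fin n} (hx : x ∈ z.1) (hy : y ∉ z.1) :
    ∃ z' : JV n k, z'.1 = insert y (z.1.erase x) ∧ (johnsonGraph n k).Adj z z' := by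
  have hy' : y ∉ z.1.erase x := fun h => hy (mem_of_mem_erase h)
  have hcard : #(insert y (z.1.erase x)) = k := by
    have := card_pos.mpr ⟨x, hx⟩
    rw [card_insert_of_notMem hy', card_erase_of_mem hx]
    omega
  refine ⟨⟨_, hcard⟩, rfl, fun h => hy ?_, ?_⟩
  · rw [h]
    exact mem_insert_self _ _
  · rw [inter_insert_of_notMem hy, inter_eq_right.mpr (erase_subset _ _), card_erase_of_mem hx,
      z.2]

lemma exists_adj (hn : 4 ≤ n) : ∃ A B : JV n 3, (johnsonGraph n 3).Adj A B := by
  obtain ⟨s, -, hs⟩ := exists_subset_card_eq (s := (univ : Finset (Fin n))) (n := 3)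
    (by simp; omega)
  obtain ⟨x, hx⟩ := card_pos.mp (by omega : 0 < #s)
  obtain ⟨y, -, hy⟩ := exists_mem_notMem_of_card_lt_card (s := s) (t := univ) (by simp; omega)
  obtain ⟨B, -, hAB⟩ := exists_adj_insert_erase ⟨s, hs⟩ hx hy
  exact ⟨_, B, hAB⟩

lemma adj_of_mem {u v : JV n 3} (huv : u ≠ v) {p q : Fin n} (hpq : p ≠ q)
    (hpu : p ∈ u.1) (hqu : q ∈ u.1) (hpv : p ∈ v.1) (hqv : q ∈ v.1) :
    (johnsonGraph n 3).Adj u v := by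
  refine ⟨huv, le_antisymm (Nat.le_of_lt_succ (card_inter_lt_of_ne huv)) ?_⟩
  rw [show 3 - 1 = #{p, q} from (card_pair hpq).symm]
  exact card_le_card (by simp [insert_subset_iff, *])

lemma card_inter_le_one_iff {u v : JV n 3} :
    #(u.1 ∩ v.1) ≤ 1 ↔ u ≠ v ∧ ¬ (johnsonGraph n 3).Adj v u := by
  constructor
  · intro h
    refine ⟨fun huv => ?_, fun hadj => ?_⟩
    · rw [huv, inter_self, v.2] at h
      omega
    · have := hadj.2
      rw [inter_comm] at this
      omega
  · rintro ⟨huv, hadj⟩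
    have := card_inter_lt_of_ne huv
    have : #(v.1 ∩ u.1) ≠ 2 := fun h => hadj ⟨Ne.symm huv, h⟩
    rw [inter_comm] at this
    omega

lemma exists_isDiamond_of_adj {G : SimpleGraph (Fin n)} {u v : JV n 3}
    (huv : (johnsonGraph n 3).Adj u v) (hu : ∀ p ∈ u.1, ∀ q ∈ u.1, p ≠ q → G.Adj p q)
    (hv : ∀ p ∈ v.1, ∀ q ∈ v.1, p ≠ q → G.Adj p q) :
    ∃ a b x y, G.IsDiamond a b x y := by
  obtain ⟨a, b, hab, hI⟩ := card_eq_two.mp (show #(u.1 ∩ v.1) = 2 from huv.2)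
  have ha : a ∈ u.1 ∩ v.1 := hI ▸ by simp
  have hb : b ∈ u.1 ∩ v.1 := hI ▸ by simp
  rw [mem_inter] at ha hb
  obtain ⟨x, hxu, hxv⟩ := exists_mem_notMem_of_ne huv.1
  obtain ⟨y, hyv, hyu⟩ := exists_mem_notMem_of_ne (Ne.symm huv.1)
  exact ⟨a, b, x, y, hu a ha.1 b hb.1 hab, hu a ha.1 x hxu (ha.2.ne_of_notMem hxv),
    hv a ha.2 y hyv (ha.1.ne_of_notMem hyu), hu b hb.1 x hxu (hb.2.ne_of_notMem hxv),
    hv b hb.2 y hyv (hb.1.ne_of_notMem hyu), fun h => hxv (h ▸ hyv)⟩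

section LowerBound

variable {S : Finset (JV n 3)} {F : Set (JV n 3)}

lemma mem_of_shadowGraph_adj
    (hF : ∀ z z', z ∈ F → z' ∉ S → (johnsonGraph n 3).Adj z z' → z' ∈ F)
    {T : JV n 3} (hT : T ∉ S) {p q : Fin n} (hp : p ∈ T.1) (hq : q ∈ T.1)
    (hpq : (shadowGraph F).Adj p q) : T ∈ F := by
  obtain ⟨hne, z, hz, hpz, hqz⟩ := hpq
  by_cases hzT : z = T
  · exact hzT ▸ hz
  · exact hF z T hz hT (adj_of_mem hzT hne hpz hqz hp hq)

lemma mem_of_isBichromatic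
    (hF : ∀ z z', z ∈ F → z' ∉ S → (johnsonGraph n 3).Adj z z' → z' ∈ F)
    {T : JV n 3} (hT : (shadowGraph F).IsBichromatic T.1) : T ∈ S := by
  by_contra hTS
  obtain ⟨⟨p, hp, q, hq, hpq⟩, p', hp', q', hq', hpq'⟩ := hT
  rw [compl_adj] at hpq'
  exact hpq'.2 ⟨hpq'.1, T, mem_of_shadowGraph_adj hF hTS hp hq hpq, hp', hq'⟩

theorem five_mul_le_card_of_adj_mem_of_adj_notMem (hn : 6 ≤ n)
    (hF : ∀ z z', z ∈ F → z' ∉ S → (johnsonGraph n 3).Adj z z' → z' ∈ F)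
    {u u' w w' : JV n 3} (hu : u ∈ F) (hu' : u' ∈ F) (huu' : (johnsonGraph n 3).Adj u u')
    (hw : w ∉ F) (hw' : w' ∉ F) (hwS : w ∉ S) (hw'S : w' ∉ S)
    (hww' : (johnsonGraph n 3).Adj w w') :
    5 * n ≤ 18 + #S := by
  classical
  have hred : ∀ z ∈ F, ∀ p ∈ z.1, ∀ q ∈ z.1, p ≠ q → (shadowGraph F).Adj p q :=
    fun z hz p hp q hq hpq => ⟨hpq, z, hz, hp, hq⟩
  have hblue : ∀ z, z ∉ F → z ∉ S → ∀ p ∈ z.1, ∀ q ∈ z.1, p ≠ q → (shadowGraph F)ᶜ.Adj p q :=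
    fun z hz hzS p hp q hq hpq =>
      (compl_adj _ _ _).mpr ⟨hpq, fun h => hz (mem_of_shadowGraph_adj hF hzS hp hq h)⟩
  obtain ⟨a, b, x, y, hR⟩ := exists_isDiamond_of_adj huu' (hred u hu) (hred u' hu')
  obtain ⟨a', b', x', y', hB⟩ :=
    exists_isDiamond_of_adj hww' (hblue w hw hwS) (hblue w' hw' hw'S)
  have h10 := ten_mul_le_sum_degree_mul_degree_compl (by simpa using hn) hR hB
  have h2 := sum_degree_mul_degree_compl_le_two_mul_card
    (𝒯 := S.map (Function.Embedding.subtype _))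
    fun T hT3 hT => mem_map.mpr ⟨⟨T, hT3⟩, mem_of_isBichromatic hF hT, rfl⟩
  rw [card_map] at h2
  rw [Fintype.card_fin] at h10
  omega

theorem five_mul_le_card_of_isSuperVertexCut (hn : 6 ≤ n)
    (hS : IsSuperVertexCut (johnsonGraph n 3) ↑S) : 5 * n ≤ 18 + #S := by
  obtain ⟨hcut, hnbr⟩ := hS
  set G := (johnsonGraph n 3).induce (↑S : Set (JV n 3))ᶜ
  obtain ⟨v₀, w₀, hvw⟩ : ∃ v₀ w₀, ¬ G.Reachable v₀ w₀ := by
    simpa [IsVertexCut, Preconnected] using hcut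
  obtain ⟨u', hu'⟩ := hnbr v₀
  obtain ⟨w', hw'⟩ := hnbr w₀
  refine five_mul_le_card_of_adj_mem_of_adj_notMem
    (F := {z | ∃ hz : z ∉ S, G.Reachable v₀ ⟨z, hz⟩}) hn ?_ ⟨v₀.2, .rfl⟩
    ⟨u'.2, hu'.reachable⟩ hu' ?_ ?_ w₀.2 w'.2 hw'
  · rintro z z' ⟨hz, hreach⟩ hz' hadj
    exact ⟨hz', hreach.trans (show G.Adj ⟨z, hz⟩ ⟨z', hz'⟩ from hadj).reachable⟩
  · rintro ⟨_, hreach⟩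
    exact hvw hreach
  · rintro ⟨_, hreach⟩
    exact hvw (hreach.trans hw'.symm.reachable)

end LowerBound

section UpperBound

variable {A B : JV n 3}

lemma card_sdiff_eq_one_of_adj (hAB : (johnsonGraph n 3).Adj A B) : #(A.1 \ B.1) = 1 := by
  rw [card_sdiff, inter_comm, hAB.2, A.2]

lemma card_union_eq_four_of_adj (hAB : (johnsonGraph n 3).Adj A B) : #(A.1 ∪ B.1) = 4 := by
  have := card_union_add_card_inter A.1 B.1
  rw [hAB.2, A.2, B.2] at this
  omega

lemma exists_card_inter_le_one (hn : 5 ≤ n) (hAB : (johnsonGraph n 3).Adj A B) :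
    ∃ z : JV n 3, #(z.1 ∩ A.1) ≤ 1 ∧ #(z.1 ∩ B.1) ≤ 1 := by
  obtain ⟨z, hz, hz3⟩ := exists_subset_card_eq (s := (A.1 ∩ B.1)ᶜ) (n := 3)
    (by rw [card_compl, Fintype.card_fin, hAB.2]; omega)
  have hzA : z ∩ A.1 ⊆ A.1 \ B.1 := fun t ht => by
    have := mem_compl.mp (hz (mem_inter.mp ht).1)
    simp_all
  have hzB : z ∩ B.1 ⊆ B.1 \ A.1 := fun t ht => by
    have := mem_compl.mp (hz (mem_inter.mp ht).1)
    simp_all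
  exact ⟨⟨z, hz3⟩, (card_le_card hzA).trans (card_sdiff_eq_one_of_adj hAB).le,
    (card_le_card hzB).trans (card_sdiff_eq_one_of_adj hAB.symm).le⟩

lemma exists_adj_card_inter_le_one (hn : 6 ≤ n) (hAB : (johnsonGraph n 3).Adj A B)
    {z : JV n 3} (hzA : #(z.1 ∩ A.1) ≤ 1) (hzB : #(z.1 ∩ B.1) ≤ 1) :
    ∃ z', (johnsonGraph n 3).Adj z z' ∧ #(z'.1 ∩ A.1) ≤ 1 ∧ #(z'.1 ∩ B.1) ≤ 1 := by
  set Q := A.1 ∪ B.1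
  have hQ : #(z.1 ∩ Q) ≤ 2 := by
    rw [inter_union_distrib_left]
    exact (card_union_le _ _).trans (by omega)
  rcases Nat.lt_or_ge #(z.1 ∩ Q) 2 with h1 | h2
  · -- replace the point of `z` in `Q`, if any, by a point outside `z`
    obtain ⟨x, hxz, hx⟩ : ∃ x ∈ z.1, ∀ t ∈ z.1 ∩ Q, t = x := by
      rcases (z.1 ∩ Q).eq_empty_or_nonempty with h | ⟨x, hx⟩
      · obtain ⟨x, hx⟩ := card_pos.mp (by rw [z.2]; norm_num : 0 < #z.1)
        exact ⟨x, hx, by simp [h]⟩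
      · exact ⟨x, (mem_inter.mp hx).1, fun t ht => card_le_one.mp (by omega) t ht x hx⟩
    obtain ⟨y, -, hy⟩ := exists_mem_notMem_of_card_lt_card (s := z.1) (t := univ)
      (by rw [z.2, card_univ, Fintype.card_fin]; omega)
    obtain ⟨z', hz', hadj⟩ := exists_adj_insert_erase z hxz hy
    have hsub : ∀ C ⊆ Q, #(z'.1 ∩ C) ≤ 1 := fun C hC => by
      have key : ∀ s ∈ z'.1 ∩ C, s = y := fun s hs => by
        rw [hz', mem_inter, mem_insert, mem_erase] at hs
        rcases hs with ⟨rfl | ⟨hsx, hsz⟩, hsC⟩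
        · rfl
        · exact absurd (hx s (mem_inter.mpr ⟨hsz, hC hsC⟩)) hsx
      exact card_le_one.mpr fun s hs t ht => (key s hs).trans (key t ht).symm
    exact ⟨z', hadj, hsub _ subset_union_left, hsub _ subset_union_right⟩
  · -- replace a point of `z` outside `Q` by another point outside `Q`, which needs `n ≥ 6`
    obtain ⟨x, hx⟩ : (z.1 \ Q).Nonempty := by
      rw [← card_pos, card_sdiff, inter_comm, z.2]
      omega
    obtain ⟨y, -, hy⟩ := exists_mem_notMem_of_card_lt_card (s := z.1 ∪ Q) (t := univ) (by
      have := card_union_add_card_inter z.1 Q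
      rw [z.2, card_union_eq_four_of_adj hAB] at this
      rw [card_univ, Fintype.card_fin]
      omega)
    obtain ⟨z', hz', hadj⟩ :=
      exists_adj_insert_erase z (mem_sdiff.mp hx).1 fun h => hy (mem_union_left _ h)
    have hsame : ∀ C ⊆ Q, z'.1 ∩ C = z.1 ∩ C := fun C hC => by
      ext t
      simp only [hz', mem_inter, mem_insert, mem_erase]
      constructor
      · rintro ⟨rfl | ⟨-, ht⟩, htC⟩
        · exact absurd (mem_union_right _ (hC htC)) hy
        · exact ⟨ht, htC⟩
      · rintro ⟨ht, htC⟩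
        exact ⟨.inr ⟨fun h => (mem_sdiff.mp hx).2 (h ▸ hC htC), ht⟩, htC⟩
    exact ⟨z', hadj, by rwa [hsame _ subset_union_left], by rwa [hsame _ subset_union_right]⟩

lemma card_edgeNeighborFinset_add_le [DecidableRel (johnsonGraph n 3).Adj] (hn : 4 ≤ n)
    (hAB : (johnsonGraph n 3).Adj A B) :
    #((johnsonGraph n 3).edgeNeighborFinset A B) + 18 ≤ 5 * n := by
  set N := (johnsonGraph n 3).neighborFinset A ∪ (johnsonGraph n 3).neighborFinset B
  set Q := A.1 ∪ B.1
  set D := Q \ (A.1 ∩ B.1)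
  have hQ : #Q = 4 := card_union_eq_four_of_adj hAB
  have hD : D ∈ Q.powersetCard 2 := by
    refine mem_powersetCard.mpr ⟨sdiff_subset, ?_⟩
    rw [card_sdiff, inter_eq_left.mpr (inter_subset_left.trans subset_union_left), hQ, hAB.2]
  have hDA : D ∩ A.1 = A.1 \ B.1 := by
    ext
    simp only [D, Q, mem_inter, mem_sdiff, mem_union]
    tauto
  have hDB : D ∩ B.1 = B.1 \ A.1 := by
    ext
    simp only [D, Q, mem_inter, mem_sdiff, mem_union]
    tauto
  -- a neighbour of the edge meets `Q` in a pair other than `D` plus one point outside `Q`,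
  -- or in a triple
  set target := ((Q.powersetCard 2).erase D ×ˢ Qᶜ.powersetCard 1) ∪ (Q.powersetCard 3 ×ˢ {∅})
  have htarget : #target ≤ 5 * (n - 4) + 4 := by
    refine (card_union_le _ _).trans ?_
    rw [card_product, card_product, card_erase_of_mem hD, card_powersetCard, card_powersetCard,
      card_powersetCard, card_compl, hQ, Fintype.card_fin, Nat.choose_one_right, card_singleton]
    norm_num [Nat.choose]
  have hmaps : ∀ z ∈ N, (z.1 ∩ Q, z.1 \ Q) ∈ target := fun z hz => by
    have h2 : #(z.1 ∩ A.1) = 2 ∨ #(z.1 ∩ B.1) = 2 := by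
      simp only [N, mem_union, mem_neighborFinset] at hz
      rcases hz with h | h
      · exact .inl (by rw [inter_comm]; exact h.2)
      · exact .inr (by rw [inter_comm]; exact h.2)
    have hzA : z.1 ∩ A.1 = z.1 ∩ Q ∩ A.1 := by
      rw [inter_assoc, inter_eq_right.mpr subset_union_left]
    have hzB : z.1 ∩ B.1 = z.1 ∩ Q ∩ B.1 := by
      rw [inter_assoc, inter_eq_right.mpr subset_union_right]
    have hI2 : 2 ≤ #(z.1 ∩ Q) := by
      rcases h2 with h | h
      · exact h ▸ card_le_card (hzA ▸ inter_subset_left)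
      · exact h ▸ card_le_card (hzB ▸ inter_subset_left)
    have hI3 : #(z.1 ∩ Q) ≤ 3 := (card_le_card inter_subset_left).trans_eq z.2
    have hsd : #(z.1 \ Q) = 3 - #(z.1 ∩ Q) := by rw [card_sdiff, inter_comm, z.2]
    simp only [target, mem_union, mem_product, mem_erase, mem_powersetCard, mem_singleton]
    rcases (by omega : #(z.1 ∩ Q) = 2 ∨ #(z.1 ∩ Q) = 3) with h | h
    · refine .inl ⟨⟨fun hzD => ?_, inter_subset_right, h⟩,
        fun t ht => mem_compl.mpr (mem_sdiff.mp ht).2, by omega⟩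
      rw [hzD, hDA] at hzA
      rw [hzD, hDB] at hzB
      rw [hzA, hzB, card_sdiff_eq_one_of_adj hAB, card_sdiff_eq_one_of_adj hAB.symm] at h2
      omega
    · exact .inr ⟨⟨inter_subset_right, h⟩, card_eq_zero.mp (by omega)⟩
  have hinj : Set.InjOn (fun z : JV n 3 => (z.1 ∩ Q, z.1 \ Q)) N := fun z _ z' _ h => by
    simp only [Prod.ext_iff] at h
    exact Subtype.ext (by rw [← sdiff_union_inter z.1 Q, ← sdiff_union_inter z'.1 Q, h.1, h.2])
  have hAB_sub : {A, B} ⊆ N := by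
    simp [N, insert_subset_iff, hAB, hAB.symm]
  have := card_sdiff_add_card_eq_card hAB_sub
  rw [card_pair hAB.1] at this
  have := card_le_card_of_injOn _ hmaps hinj
  change #(N \ {A, B}) + 18 ≤ 5 * n
  omega

theorem exists_isSuperVertexCut_card_add_le (hn : 6 ≤ n) :
    ∃ S : Finset (JV n 3), IsSuperVertexCut (johnsonGraph n 3) ↑S ∧ #S + 18 ≤ 5 * n := by
  classical
  obtain ⟨A, B, hAB⟩ := exists_adj (n := n) (by omega)
  refine ⟨_, isSuperVertexCut_edgeNeighborFinset hAB ?_ ?_,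
    card_edgeNeighborFinset_add_le (by omega) hAB⟩
  · obtain ⟨z, hzA, hzB⟩ := exists_card_inter_le_one (by omega) hAB
    exact ⟨z, card_inter_le_one_iff.mp hzA, card_inter_le_one_iff.mp hzB⟩
  · intro z hzA hzB
    obtain ⟨z', hadj, h1, h2⟩ := exists_adj_card_inter_le_one hn hAB
      (card_inter_le_one_iff.mpr hzA) (card_inter_le_one_iff.mpr hzB)
    exact ⟨z', hadj, card_inter_le_one_iff.mp h1, card_inter_le_one_iff.mp h2⟩

end UpperBound

end Johnson

/-- For `n ≥ 6`, the super-connectivity of `J(n,3)` equals `5n - 18`. -/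
theorem superConnectivity_johnson_three (n : ℕ) (hn : 6 ≤ n) :
    superConnectivity (johnsonGraph n 3) = ((5 * n - 18 : ℕ) : ℕ∞) := by
  obtain ⟨S, hS, hcard⟩ := Johnson.exists_isSuperVertexCut_card_add_le hn
  refine le_antisymm (sInf_le ⟨S, hS, ?_⟩) (le_sInf ?_)
  · have := Johnson.five_mul_le_card_of_isSuperVertexCut hn hS
    congr 1
    omega
  · rintro _ ⟨T, hT, rfl⟩
    have := Johnson.five_mul_le_card_of_isSuperVertexCut hn hT
    exact_mod_cast (by omega : 5 * n - 18 ≤ #T)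
end

section
/- For n ∈ {3, 4, 5}, the Johnson graph J(n,2) has no super vertex-cut; that is, κ'(J(n,2)) = +∞. -/
/-!
For `n ≤ 5`, any two edges of `J(n,2)` span two `3`-subsets of `[n]`, which must meet; a common
element lies in an endpoint of each edge, and two `2`-subsets sharing an element are equal or
adjacent. So whenever `G - S` has no isolated vertex, any two of its vertices are joined through
their neighbours by a walk of length at most `3` avoiding `S`, and `S` does not disconnect.
-/

open SimpleGraph Finset

theorem not_isSuperVertexCut_of_edges_near {V : Type*} (G : SimpleGraph V)
    (hnear : ∀ a b c d, G.Adj a b → G.Adj c d →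
      ∃ x ∈ ({a, b} : Set V), ∃ y ∈ ({c, d} : Set V), x = y ∨ G.Adj x y)
    (S : Set V) : ¬ IsSuperVertexCut G S := by
  rintro ⟨hcut, hnoIso⟩
  refine hcut fun u v => ?_
  obtain ⟨u', hu'⟩ := hnoIso u
  obtain ⟨v', hv'⟩ := hnoIso v
  obtain ⟨x, hx, y, hy, hxy⟩ := hnear _ _ _ _ hu' hv'
  have hux : ∃ x' : ↥Sᶜ, x'.val = x ∧ (G.induce Sᶜ).Reachable u x' := by
    rcases hx with rfl | rfl
    exacts [⟨u, rfl, .rfl⟩, ⟨u', rfl, hu'.reachable⟩]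
  have hvy : ∃ y' : ↥Sᶜ, y'.val = y ∧ (G.induce Sᶜ).Reachable v y' := by
    rcases hy with rfl | rfl
    exacts [⟨v, rfl, .rfl⟩, ⟨v', rfl, hv'.reachable⟩]
  obtain ⟨x', rfl, hux'⟩ := hux
  obtain ⟨y', rfl, hvy'⟩ := hvy
  have hx'y' : (G.induce Sᶜ).Reachable x' y' := by
    rcases hxy with h | h
    exacts [Subtype.ext h ▸ .rfl, Adj.reachable h]
  exact hux'.trans (hx'y'.trans hvy'.symm)

theorem superConnectivity_eq_top_of_forall_not_isSuperVertexCut {V : Type*} [Fintype V]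
    (G : SimpleGraph V) (h : ∀ S : Set V, ¬ IsSuperVertexCut G S) : superConnectivity G = ⊤ := by
  rw [superConnectivity, sInf_eq_top]
  rintro m ⟨S, hS, -⟩
  exact (h _ hS).elim

theorem johnsonGraph_two_eq_or_adj_of_mem {n : ℕ} {u v : JV n 2} {i : Fin n}
    (hu : i ∈ u.val) (hv : i ∈ v.val) : u = v ∨ (johnsonGraph n 2).Adj u v := by
  by_cases huv : u = v
  · exact .inl huv
  refine .inr ⟨huv, ?_⟩
  have hpos : 0 < (u.val ∩ v.val).card := card_pos.mpr ⟨i, mem_inter.mpr ⟨hu, hv⟩⟩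
  have hlt : (u.val ∩ v.val).card < 2 := by
    by_contra! hge
    have hsub : u.val ∩ v.val = u.val :=
      eq_of_subset_of_card_le inter_subset_left (u.prop.le.trans hge)
    have hsub' : u.val ∩ v.val = v.val :=
      eq_of_subset_of_card_le inter_subset_right (v.prop.le.trans hge)
    exact huv (Subtype.ext (hsub.symm.trans hsub'))
  omega

theorem johnsonGraph_two_card_union_of_adj {n : ℕ} {u v : JV n 2}
    (h : (johnsonGraph n 2).Adj u v) : (u.val ∪ v.val).card = 3 := by
  have := card_union_add_card_inter u.val v.val
  rw [u.prop, v.prop, h.2] at this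
  omega

theorem johnsonGraph_two_edges_near {n : ℕ} (hn : n ≤ 5) (a b c d : JV n 2)
    (hab : (johnsonGraph n 2).Adj a b) (hcd : (johnsonGraph n 2).Adj c d) :
    ∃ x ∈ ({a, b} : Set (JV n 2)), ∃ y ∈ ({c, d} : Set (JV n 2)),
      x = y ∨ (johnsonGraph n 2).Adj x y := by
  have hmeet : ¬ Disjoint (a.val ∪ b.val) (c.val ∪ d.val) := by
    intro hdisj
    have hcard := card_union_of_disjoint hdisj
    rw [johnsonGraph_two_card_union_of_adj hab, johnsonGraph_two_card_union_of_adj hcd] at hcard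
    have hle := card_le_univ (a.val ∪ b.val ∪ (c.val ∪ d.val))
    rw [Fintype.card_fin] at hle
    omega
  obtain ⟨i, hi₁, hi₂⟩ := not_disjoint_iff.mp hmeet
  have hx : ∃ x ∈ ({a, b} : Set (JV n 2)), i ∈ x.val := by
    rcases mem_union.mp hi₁ with h | h
    exacts [⟨a, .inl rfl, h⟩, ⟨b, .inr rfl, h⟩]
  have hy : ∃ y ∈ ({c, d} : Set (JV n 2)), i ∈ y.val := by
    rcases mem_union.mp hi₂ with h | h
    exacts [⟨c, .inl rfl, h⟩, ⟨d, .inr rfl, h⟩]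
  obtain ⟨x, hx, hix⟩ := hx
  obtain ⟨y, hy, hiy⟩ := hy
  exact ⟨x, hx, y, hy, johnsonGraph_two_eq_or_adj_of_mem hix hiy⟩

/-- For `n ∈ {3,4,5}`, the Johnson graph `J(n,2)` has no super vertex-cut, so
its super-connectivity is `+∞`. -/
theorem superConnectivity_johnson_two_small (n : ℕ) (hn : n = 3 ∨ n = 4 ∨ n = 5) :
    (∀ S : Set (JV n 2), ¬ IsSuperVertexCut (johnsonGraph n 2) S) ∧
    superConnectivity (johnsonGraph n 2) = ⊤ := by
  have hnoCut : ∀ S : Set (JV n 2), ¬ IsSuperVertexCut (johnsonGraph n 2) S :=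
    not_isSuperVertexCut_of_edges_near _ (johnsonGraph_two_edges_near (n := n) (by omega))
  exact ⟨hnoCut, superConnectivity_eq_top_of_forall_not_isSuperVertexCut _ hnoCut⟩
end

section
/- Let G be a finite connected graph and let S be a minimum super vertex-cut of G. If a vertex v ∈ S has a neighbour in some connected component of G−S, then v has at least one neighbour in every connected component of G−S. In particular, S contains a vertex having at least one neighbour in every component of G−S. -/
open SimpleGraph Finset

/-! The argument: if `v ∈ S` has a neighbour outside `S` but none in the component `C` of
`G - S`, then `C` stays closed under adjacency in `G - (S \ {v})`, which therefore is
disconnected, and `v`'s neighbour keeps it from being isolated. So `S \ {v}` is a smaller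
super vertex-cut. Since `G` is connected, some vertex of `S` has a neighbour outside `S`. -/

namespace SimpleGraph

variable {V : Type*} {G : SimpleGraph V}

theorem Reachable.mem_of_adj_closed {P : V → Prop} (hP : ∀ x y, P x → G.Adj x y → P y)
    {x y : V} (h : G.Reachable x y) (hx : P x) : P y := by
  rw [reachable_iff_reflTransGen] at h
  induction h with
  | refl => exact hx
  | tail _ hab ih => exact hP _ _ ih hab

theorem not_preconnected_induce_insert {s : Set V} {v : V} (hv : v ∉ s)
    (C : (G.induce s).ConnectedComponent)
    (hC : ∀ w, (G.induce s).connectedComponentMk w = C → ¬ G.Adj v w) :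
    ¬ (G.induce (insert v s)).Preconnected := by
  intro hpre
  obtain ⟨x, hx⟩ := C.exists_rep
  let inC : ↥(insert v s) → Prop := fun y =>
    ∃ hy : ↑y ∈ s, (G.induce s).connectedComponentMk ⟨y, hy⟩ = C
  have closed : ∀ y z, inC y → (G.induce (insert v s)).Adj y z → inC z := by
    rintro y ⟨z, hz⟩ ⟨hy, hyC⟩ hyz
    obtain rfl | hzs := hz
    · exact absurd hyz.symm (hC _ hyC)
    · refine ⟨hzs, hyC ▸ ConnectedComponent.sound ?_⟩
      exact (show (G.induce s).Adj ⟨y, hy⟩ ⟨z, hzs⟩ from hyz).reachable.symm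
  obtain ⟨hvs, -⟩ := (hpre ⟨x, .inr x.2⟩ ⟨v, .inl rfl⟩).mem_of_adj_closed closed ⟨x.2, hx⟩
  exact hv hvs

theorem exists_induce_adj_insert {s : Set V} {v : V}
    (hs : ∀ x : s, ∃ y : s, (G.induce s).Adj x y) (hv : ∃ w : s, G.Adj v w) :
    ∀ x : ↥(insert v s), ∃ y : ↥(insert v s), (G.induce (insert v s)).Adj x y := by
  rintro ⟨x, rfl | hx⟩
  · obtain ⟨w, hw⟩ := hv
    exact ⟨⟨w, .inr w.2⟩, hw⟩
  · obtain ⟨y, hy⟩ := hs ⟨x, hx⟩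
    exact ⟨⟨y, .inr y.2⟩, hy⟩

end SimpleGraph

section SuperVertexCut

variable {V : Type*} {G : SimpleGraph V}

theorem IsSuperVertexCut.sdiff_singleton {S : Set V} (hS : IsSuperVertexCut G S) {v : V}
    (hv : v ∈ S) (hvw : ∃ w : ↥Sᶜ, G.Adj v w) (C : (G.induce Sᶜ).ConnectedComponent)
    (hC : ∀ w, (G.induce Sᶜ).connectedComponentMk w = C → ¬ G.Adj v w) :
    IsSuperVertexCut G (S \ {v}) := by
  have hcompl : (S \ {v})ᶜ = insert v Sᶜ := by
    rw [Set.compl_sdiff, Set.singleton_union]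
  unfold IsSuperVertexCut IsVertexCut
  rw [hcompl]
  exact ⟨not_preconnected_induce_insert (not_not.2 hv) C hC,
    exists_induce_adj_insert hS.2 hvw⟩

theorem IsVertexCut.exists_adj_compl {S : Set V} (hS : IsVertexCut G S)
    (hG : G.Preconnected) : ∃ v ∈ S, ∃ w : ↥Sᶜ, G.Adj v w := by
  by_contra! hno
  refine hS fun a b => ?_
  let reachableFromA : V → Prop := fun y => ∃ hy : y ∈ Sᶜ, (G.induce Sᶜ).Reachable a ⟨y, hy⟩
  have closed : ∀ y z, reachableFromA y → G.Adj y z → reachableFromA z := by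
    rintro y z ⟨hy, hay⟩ hyz
    have hz : z ∈ Sᶜ := fun hzS => hno z hzS ⟨y, hy⟩ hyz.symm
    exact ⟨hz, hay.trans (show (G.induce Sᶜ).Adj ⟨y, hy⟩ ⟨z, hz⟩ from hyz).reachable⟩
  exact ((hG a b).mem_of_adj_closed closed ⟨a.2, Reachable.refl _⟩).2

theorem IsMinSuperVertexCut.exists_adj_of_mem_of_exists_adj [Fintype V] [DecidableEq V]
    {S : Finset V} (hS : IsMinSuperVertexCut G S) {v : V} (hv : v ∈ S)
    (hvw : ∃ w : ↥((↑S : Set V)ᶜ), G.Adj v w)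
    (C : (G.induce ((↑S : Set V)ᶜ)).ConnectedComponent) :
    ∃ w : ↥((↑S : Set V)ᶜ), (G.induce ((↑S : Set V)ᶜ)).connectedComponentMk w = C ∧ G.Adj v w := by
  by_contra! hC
  have hcut : IsSuperVertexCut G ↑(S.erase v) := by
    rw [Finset.coe_erase]
    exact hS.1.sdiff_singleton hv hvw C hC
  exact (Finset.card_erase_lt_of_mem hv).not_ge (hS.2 _ hcut)

end SuperVertexCut

/-- If `S` is a minimum super vertex-cut of a finite connected graph `G` and
`v ∈ S` has a neighbour in some component of `G - S`, then `v` has a neighbour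
in every component of `G - S`. In particular, `S` contains a vertex with a
neighbour in every component of `G - S`. -/
theorem minSuperVertexCut_neighbor_every_component {V : Type*} [Fintype V]
    (G : SimpleGraph V) (hG : G.Connected)
    (S : Finset V) (hS : IsMinSuperVertexCut G S) :
    (∀ v ∈ S, (∃ w : ↥((↑S : Set V)ᶜ), G.Adj v ↑w) →
      ∀ C : (G.induce ((↑S : Set V)ᶜ)).ConnectedComponent,
        ∃ w : ↥((↑S : Set V)ᶜ),
          (G.induce ((↑S : Set V)ᶜ)).connectedComponentMk w = C ∧ G.Adj v ↑w) ∧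
    (∃ v ∈ S, ∀ C : (G.induce ((↑S : Set V)ᶜ)).ConnectedComponent,
      ∃ w : ↥((↑S : Set V)ᶜ),
        (G.induce ((↑S : Set V)ᶜ)).connectedComponentMk w = C ∧ G.Adj v ↑w) := by
  classical
  refine ⟨fun _ hv hvw => hS.exists_adj_of_mem_of_exists_adj hv hvw, ?_⟩
  obtain ⟨v, hv, hvw⟩ := hS.1.1.exists_adj_compl hG.preconnected
  exact ⟨v, hv, hS.exists_adj_of_mem_of_exists_adj hv hvw⟩
end
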